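/- arXiv:1102.5131 — 10 statements merged into one kernel-verified Lean document; each statement's English description precedes it below -/
import Mathlib

section
/- The assignment 𝒵 ↦ Σ_𝒵 := {(α,n) ∈ Φ × ℤ | n ∈ Z_α} is a bijection from the set of root functions on Φ onto the set of root subsystems of the loop extension Φ × ℤ. -/
open Module Submodule

variable {V : Type*}

/-- For `A, B ⊆ ℤ` and `c : ℤ`, the set `A - c·B = {a - c*b | a ∈ A, b ∈ B}`. -/
def zdiff (A : Set ℤ) (c : ℤ) (B : Set ℤ) : Set ℤ := {z | ∃ a ∈ A, ∃ b ∈ B, z = a - c * b}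

/-- The set `n·ℤ` of integer multiples of `n`. -/
def zmul (n : ℤ) : Set ℤ := {z | ∃ k : ℤ, z = n * k}

/-- Minkowski sum of two sets of integers. -/
def msum (A B : Set ℤ) : Set ℤ := {z | ∃ a ∈ A, ∃ b ∈ B, z = a + b}

section
variable [AddCommGroup V] [Module ℝ V]

/-- `Ψ` is a root subsystem of `Φ` (with coroot assignment `cv`):
`Ψ ⊆ Φ` and `s_α(β) = β - ⟨β,α∨⟩•α ∈ Ψ` for all `α, β ∈ Ψ`. -/
def IsRootSubsystem (Φ : Set V) (cv : V → Module.Dual ℝ V) (Ψ : Set V) : Prop :=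
  Ψ ⊆ Φ ∧ ∀ α ∈ Ψ, ∀ β ∈ Ψ, β - cv α β • α ∈ Ψ

/-- `Z : V → Set ℤ` is a root function for `Φ`:
`Z β - ⟨β,α∨⟩·Z α ⊆ Z (s_α β)` for all `α, β ∈ Φ`.
Here `pairInt β α` is the integer `⟨β, α∨⟩`. -/
def IsRootFunction (Φ : Set V) (cv : V → Module.Dual ℝ V) (pairInt : V → V → ℤ)
    (Z : V → Set ℤ) : Prop :=
  ∀ α ∈ Φ, ∀ β ∈ Φ, zdiff (Z β) (pairInt β α) (Z α) ⊆ Z (β - cv α β • α)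

/-- `S` is a root subsystem of the loop extension `Φ × ℤ`:
`S ⊆ Φ × ℤ` and `S` is closed under the reflections
`ŝ_(α,m) (β,n) = (s_α β, n - m·⟨β,α∨⟩)`. -/
def IsLoopSubsystem (Φ : Set V) (cv : V → Module.Dual ℝ V) (pairInt : V → V → ℤ)
    (S : Set (V × ℤ)) : Prop :=
  (∀ p ∈ S, p.1 ∈ Φ) ∧
  ∀ p ∈ S, ∀ q ∈ S, (q.1 - cv p.1 q.1 • p.1, q.2 - p.2 * pairInt q.1 p.1) ∈ S

/-- The group `W_Ψ` of linear automorphisms of `V` generated by the reflections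
`s_α : v ↦ v - ⟨v,α∨⟩•α` for `α ∈ Ψ`. -/
def WGroup (cv : V → Module.Dual ℝ V) (Ψ : Set V) (h2 : ∀ α ∈ Ψ, cv α α = 2) :
    Subgroup (V ≃ₗ[ℝ] V) :=
  Subgroup.closure {w | ∃ α, ∃ hα : α ∈ Ψ, w = Module.reflection (h2 α hα)}

/-- `X(α) = {f(α) | f ∈ X}` for a set `X` of coweights (elements of `Ω(Ψ) = Hom_ℤ(ℤΨ, ℤ)`,
where `ℤΨ = span ℤ Γ`). -/
def Xval (Γ : Set V) (X : Set (span ℤ (Γ : Set V) →ₗ[ℤ] ℤ)) {α : V}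
    (h : α ∈ span ℤ Γ) : Set ℤ :=
  {z | ∃ f ∈ X, f ⟨α, h⟩ = z}

/-- `X` is an admissible subgroup of the coweight lattice `Ω(Ψ) = Hom_ℤ(ℤΨ, ℤ)`
(`ℤΨ = span ℤ Γ`): there is `N : Ψ → ℕ` with `n_β ∣ ⟨β,α∨⟩·n_α` for all `α, β ∈ Ψ` and
`n_{w(α)} = n_α` for all `α ∈ Ψ`, `w ∈ W_Ψ`, such that
`X = {f ∈ Ω(Ψ) | f(α) ∈ n_α·ℤ for all α ∈ Ψ}`. -/
def IsAdmissibleSubgroup (cv : V → Module.Dual ℝ V) (pairInt : V → V → ℤ)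
    (Γ Ψ : Set V) (h2Ψ : ∀ α ∈ Ψ, cv α α = 2) (hspan : ∀ α ∈ Ψ, α ∈ span ℤ Γ)
    (X : AddSubgroup (span ℤ (Γ : Set V) →ₗ[ℤ] ℤ)) : Prop :=
  ∃ N : V → ℕ,
    (∀ α ∈ Ψ, ∀ β ∈ Ψ, (N β : ℤ) ∣ pairInt β α * N α) ∧
    (∀ α ∈ Ψ, ∀ w ∈ WGroup cv Ψ h2Ψ, N (w α) = N α) ∧
    ((X : Set (span ℤ (Γ : Set V) →ₗ[ℤ] ℤ)) =
      {f | ∀ α, ∀ hα : α ∈ Ψ, (N α : ℤ) ∣ f ⟨α, hspan α hα⟩})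

end

variable [AddCommGroup V] [Module ℝ V]

theorem stmt3
    (Φ : Set V) (cv : V → Module.Dual ℝ V) (pairInt : V → V → ℤ)
    (hne : ∀ α ∈ Φ, α ≠ 0)
    (h2 : ∀ α ∈ Φ, cv α α = 2)
    (hpair : ∀ α ∈ Φ, ∀ β ∈ Φ, (pairInt β α : ℝ) = cv α β)
    (hrefl : ∀ α ∈ Φ, (fun β => β - cv α β • α) '' Φ = Φ) :
    Set.BijOn (fun Z : V → Set ℤ => {q : V × ℤ | q.1 ∈ Φ ∧ q.2 ∈ Z q.1})
      {Z : V → Set ℤ | IsRootFunction Φ cv pairInt Z ∧ ∀ α, α ∉ Φ → Z α = ∅}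
      {S : Set (V × ℤ) | IsLoopSubsystem Φ cv pairInt S} := by
  refine ⟨?_, ?_, ?_⟩
  · -- MapsTo
    rintro Z ⟨hZ, -⟩
    refine ⟨fun p hp => hp.1, ?_⟩
    rintro ⟨α, m⟩ ⟨hα, hm⟩ ⟨β, n⟩ ⟨hβ, hn⟩
    constructor
    · have := hrefl α hα
      rw [← this]
      exact ⟨β, hβ, rfl⟩
    · have : n - pairInt β α * m ∈ Z (β - cv α β • α) :=
        hZ α hα β hβ ⟨n, hn, m, hm, rfl⟩
      simpa [mul_comm] using this
  · -- InjOn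
    rintro Z ⟨-, hZ0⟩ Z' ⟨-, hZ'0⟩ h
    funext α
    by_cases hα : α ∈ Φ
    · ext n
      have h1 : ((α, n) ∈ {q : V × ℤ | q.1 ∈ Φ ∧ q.2 ∈ Z q.1}) ↔
          ((α, n) ∈ {q : V × ℤ | q.1 ∈ Φ ∧ q.2 ∈ Z' q.1}) := by
        simp only [Set.ext_iff] at h; exact h (α, n)
      simpa [hα] using h1
    · rw [hZ0 α hα, hZ'0 α hα]
  · -- SurjOn
    rintro S ⟨hS1, hS2⟩
    refine ⟨fun α => {n | (α, n) ∈ S}, ⟨?_, ?_⟩, ?_⟩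
    · rintro α hα β hβ z ⟨n, hn, m, hm, rfl⟩
      have := hS2 (α, m) hm (β, n) hn
      simpa [mul_comm] using this
    · intro α hα
      ext n
      simp only [Set.mem_setOf_eq, Set.mem_empty_iff_false, iff_false]
      exact fun hn => hα (hS1 _ hn)
    · ext ⟨α, n⟩
      simp only [Set.mem_setOf_eq]
      exact ⟨fun h => h.2, fun h => ⟨hS1 _ h, h⟩⟩
end

section
/- A function p : Ψ → ℤ, α ↦ p_α, satisfies p_{s_α(β)} = p_β − ⟨β,α∨⟩·p_α for all α,β ∈ Ψ if and only if there exists f ∈ Ω(Ψ) with p_α = f(α) for all α ∈ Ψ. In that case f is unique; consequently such a function p is uniquely determined by its restriction to Γ, and every function Γ → ℤ is the restriction of exactly one such p. -/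
/-!
A linear form `f` on `ℤΨ` satisfies the identity because `s_α β = β - ⟨β,α∨⟩ α` already holds in
`ℤΨ`. Conversely, the roots on which two solutions `p, q` agree form a root subsystem, so if they
agree on `Γ` they agree on all of `Ψ` by minimality. Since `Γ` is a `ℤ`-basis of `ℤΨ`, every
function on `Γ` is the restriction of exactly one linear form, which gives existence and
uniqueness of `f` as well as the statements about restrictions to `Γ`.
-/

open Module Submodule

variable {V : Type*}

section SpanOfLinearIndependent

variable {R M N : Type*}

theorem LinearMap.ext_span [Semiring R] [AddCommMonoid M] [Module R M] [AddCommMonoid N]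
    [Module R N] {s : Set M} {f g : span R s →ₗ[R] N}
    (h : ∀ x (hx : x ∈ s), f ⟨x, subset_span hx⟩ = g ⟨x, subset_span hx⟩) : f = g :=
  LinearMap.ext_on span_span_coe_preimage fun x hx => h x hx

theorem LinearIndependent.exists_linearMap_span_eq [CommRing R] [AddCommGroup M] [Module R M]
    [AddCommGroup N] [Module R N] {s : Set M} (hs : LinearIndependent R ((↑) : s → M))
    (g : M → N) : ∃ f : span R s →ₗ[R] N, ∀ x (hx : x ∈ s), f ⟨x, subset_span hx⟩ = g x := by
  let b : Basis s R (span R s) :=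
    (Basis.span hs).map (LinearEquiv.ofEq _ _ (by rw [Subtype.range_coe]))
  refine ⟨b.constr R fun x => g x, fun x hx => ?_⟩
  have hb : b ⟨x, hx⟩ = ⟨x, subset_span hx⟩ := by ext; simp [b]
  rw [← hb, b.constr_basis]

end SpanOfLinearIndependent

section ReflectionCocycle

variable [AddCommGroup V] [Module ℝ V]

def IsReflectionCocycle (cv : V → Module.Dual ℝ V) (pairInt : V → V → ℤ) (Ψ : Set V)
    (p : V → ℤ) : Prop :=
  ∀ α ∈ Ψ, ∀ β ∈ Ψ, p (β - cv α β • α) = p β - pairInt β α * p α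

variable {cv : V → Module.Dual ℝ V} {pairInt : V → V → ℤ} {Ψ : Set V} {p q : V → ℤ}

theorem IsReflectionCocycle.congr (hq : IsReflectionCocycle cv pairInt Ψ q)
    (hpq : Set.EqOn p q Ψ) (hΨcl : ∀ α ∈ Ψ, ∀ β ∈ Ψ, β - cv α β • α ∈ Ψ) :
    IsReflectionCocycle cv pairInt Ψ p := by
  intro α hα β hβ
  rw [hpq (hΨcl α hα β hβ), hpq hα, hpq hβ, hq α hα β hβ]

theorem isReflectionCocycle_extend_linearMap {L : Submodule ℤ V} (hΨL : Ψ ⊆ L)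
    (hpair : ∀ α ∈ Ψ, ∀ β ∈ Ψ, (pairInt β α : ℝ) = cv α β) (f : L →ₗ[ℤ] ℤ) :
    IsReflectionCocycle cv pairInt Ψ (Function.extend ((↑) : L → V) f 0) := by
  intro α hα β hβ
  set a : L := ⟨α, hΨL hα⟩
  set b : L := ⟨β, hΨL hβ⟩
  have hext (x : L) : Function.extend ((↑) : L → V) f 0 x = f x :=
    Subtype.val_injective.extend_apply f 0 x
  have hrefl : β - cv α β • α = ((b - pairInt β α • a : L) : V) := by
    rw [← hpair α hα β hβ, Int.cast_smul_eq_zsmul]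
    rfl
  rw [hrefl, hext, map_sub, map_zsmul, smul_eq_mul, ← hext a, ← hext b]

theorem isRootSubsystem_setOf_eq {Φ : Set V} (hp : IsReflectionCocycle cv pairInt Ψ p)
    (hq : IsReflectionCocycle cv pairInt Ψ q) (hΨΦ : Ψ ⊆ Φ)
    (hΨcl : ∀ α ∈ Ψ, ∀ β ∈ Ψ, β - cv α β • α ∈ Ψ) :
    IsRootSubsystem Φ cv {α | α ∈ Ψ ∧ p α = q α} := by
  refine ⟨fun α hα => hΨΦ hα.1, ?_⟩
  rintro α ⟨hα, hpqα⟩ β ⟨hβ, hpqβ⟩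
  exact ⟨hΨcl α hα β hβ, by rw [hp α hα β hβ, hq α hα β hβ, hpqα, hpqβ]⟩

theorem IsReflectionCocycle.eqOn_of_eqOn_generators {Φ Γ : Set V}
    (hp : IsReflectionCocycle cv pairInt Ψ p) (hq : IsReflectionCocycle cv pairInt Ψ q)
    (hΨΦ : Ψ ⊆ Φ) (hΨcl : ∀ α ∈ Ψ, ∀ β ∈ Ψ, β - cv α β • α ∈ Ψ) (hΓΨ : Γ ⊆ Ψ)
    (hmin : ∀ Ψ', IsRootSubsystem Φ cv Ψ' → Γ ⊆ Ψ' → Ψ ⊆ Ψ') (hpq : Set.EqOn p q Γ) :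
    Set.EqOn p q Ψ := fun _ hα =>
  (hmin _ (isRootSubsystem_setOf_eq hp hq hΨΦ hΨcl) (fun _ hγ => ⟨hΓΨ hγ, hpq hγ⟩) hα).2

end ReflectionCocycle

variable [AddCommGroup V] [Module ℝ V]

theorem stmt4_general
    (Φ : Set V) (cv : V → Module.Dual ℝ V) (pairInt : V → V → ℤ)
    (hpair : ∀ α ∈ Φ, ∀ β ∈ Φ, (pairInt β α : ℝ) = cv α β)
    (Γ Ψ : Set V)
    (hli : LinearIndependent ℝ (fun γ : Γ => (γ : V)))
    (hΨΦ : Ψ ⊆ Φ) (hΨcl : ∀ α ∈ Ψ, ∀ β ∈ Ψ, β - cv α β • α ∈ Ψ)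
    (hΓΨ : Γ ⊆ Ψ)
    (hmin : ∀ Ψ', IsRootSubsystem Φ cv Ψ' → Γ ⊆ Ψ' → Ψ ⊆ Ψ')
    (hspan : ∀ α ∈ Ψ, α ∈ span ℤ Γ)
    (p : V → ℤ) :
    ((∀ α ∈ Ψ, ∀ β ∈ Ψ, p (β - cv α β • α) = p β - pairInt β α * p α) ↔
      ∃ f : span ℤ Γ →ₗ[ℤ] ℤ, ∀ α, ∀ hα : α ∈ Ψ, p α = f ⟨α, hspan α hα⟩) ∧
    (∀ f g : span ℤ Γ →ₗ[ℤ] ℤ,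
      (∀ α, ∀ hα : α ∈ Ψ, p α = f ⟨α, hspan α hα⟩) →
      (∀ α, ∀ hα : α ∈ Ψ, p α = g ⟨α, hspan α hα⟩) → f = g) ∧
    ((∀ α ∈ Ψ, ∀ β ∈ Ψ, p (β - cv α β • α) = p β - pairInt β α * p α) →
      ∀ q : V → ℤ,
        (∀ α ∈ Ψ, ∀ β ∈ Ψ, q (β - cv α β • α) = q β - pairInt β α * q α) →
        (∀ γ ∈ Γ, q γ = p γ) → ∀ α ∈ Ψ, q α = p α) ∧
    (∀ g : V → ℤ, ∃ q : V → ℤ,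
      (∀ α ∈ Ψ, ∀ β ∈ Ψ, q (β - cv α β • α) = q β - pairInt β α * q α) ∧
      ∀ γ ∈ Γ, q γ = g γ) := by
  have hliZ : LinearIndependent ℤ ((↑) : Γ → V) := hli.restrict_scalars' ℤ
  have extend_cocycle (f : span ℤ Γ →ₗ[ℤ] ℤ) :
      IsReflectionCocycle cv pairInt Ψ (Function.extend ((↑) : span ℤ Γ → V) f 0) :=
    isReflectionCocycle_extend_linearMap hspan
      (fun α hα β hβ => hpair α (hΨΦ hα) β (hΨΦ hβ)) f
  have extend_apply (f : span ℤ Γ →ₗ[ℤ] ℤ) (α : V) (hα : α ∈ span ℤ Γ) :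
      Function.extend ((↑) : span ℤ Γ → V) f 0 α = f ⟨α, hα⟩ :=
    Subtype.val_injective.extend_apply f 0 ⟨α, hα⟩
  have rigid {p q : V → ℤ} (hp : IsReflectionCocycle cv pairInt Ψ p)
      (hq : IsReflectionCocycle cv pairInt Ψ q) : Set.EqOn p q Γ → Set.EqOn p q Ψ :=
    hp.eqOn_of_eqOn_generators hq hΨΦ hΨcl hΓΨ hmin
  have represent {p : V → ℤ} (hp : IsReflectionCocycle cv pairInt Ψ p) :
      ∃ f : span ℤ Γ →ₗ[ℤ] ℤ, ∀ α, ∀ hα : α ∈ Ψ, p α = f ⟨α, hspan α hα⟩ := by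
    obtain ⟨f, hf⟩ := hliZ.exists_linearMap_span_eq p
    refine ⟨f, fun α hα => (rigid hp (extend_cocycle f) (fun γ hγ => ?_) hα).trans
      (extend_apply f α _)⟩
    rw [extend_apply f γ (subset_span hγ), hf γ hγ]
  refine ⟨⟨represent, fun ⟨f, hf⟩ => (extend_cocycle f).congr
      (fun α hα => (hf α hα).trans (extend_apply f α _).symm) hΨcl⟩,
    fun f g hf hg => LinearMap.ext_span fun γ hγ => (hf γ (hΓΨ hγ)).symm.trans (hg γ (hΓΨ hγ)),
    fun hp q hq hqp => rigid hq hp hqp, fun g => ?_⟩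
  obtain ⟨f, hf⟩ := hliZ.exists_linearMap_span_eq g
  exact ⟨_, extend_cocycle f, fun γ hγ => (extend_apply f γ (subset_span hγ)).trans (hf γ hγ)⟩

theorem stmt4
    (Φ : Set V) (cv : V → Module.Dual ℝ V) (pairInt : V → V → ℤ)
    (hne : ∀ α ∈ Φ, α ≠ 0)
    (h2 : ∀ α ∈ Φ, cv α α = 2)
    (hpair : ∀ α ∈ Φ, ∀ β ∈ Φ, (pairInt β α : ℝ) = cv α β)
    (hrefl : ∀ α ∈ Φ, (fun β => β - cv α β • α) '' Φ = Φ)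
    (Γ Ψ : Set V) (hΓΦ : Γ ⊆ Φ)
    (hli : LinearIndependent ℝ (fun γ : Γ => (γ : V)))
    (hΨΦ : Ψ ⊆ Φ) (hΨcl : ∀ α ∈ Ψ, ∀ β ∈ Ψ, β - cv α β • α ∈ Ψ)
    (hΓΨ : Γ ⊆ Ψ)
    (hmin : ∀ Ψ', IsRootSubsystem Φ cv Ψ' → Γ ⊆ Ψ' → Ψ ⊆ Ψ')
    (hspan : ∀ α ∈ Ψ, α ∈ span ℤ Γ)
    (p : V → ℤ) :
    ((∀ α ∈ Ψ, ∀ β ∈ Ψ, p (β - cv α β • α) = p β - pairInt β α * p α) ↔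
      ∃ f : span ℤ Γ →ₗ[ℤ] ℤ, ∀ α, ∀ hα : α ∈ Ψ, p α = f ⟨α, hspan α hα⟩) ∧
    (∀ f g : span ℤ Γ →ₗ[ℤ] ℤ,
      (∀ α, ∀ hα : α ∈ Ψ, p α = f ⟨α, hspan α hα⟩) →
      (∀ α, ∀ hα : α ∈ Ψ, p α = g ⟨α, hspan α hα⟩) → f = g) ∧
    ((∀ α ∈ Ψ, ∀ β ∈ Ψ, p (β - cv α β • α) = p β - pairInt β α * p α) →
      ∀ q : V → ℤ,
        (∀ α ∈ Ψ, ∀ β ∈ Ψ, q (β - cv α β • α) = q β - pairInt β α * q α) →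
        (∀ γ ∈ Γ, q γ = p γ) → ∀ α ∈ Ψ, q α = p α) ∧
    (∀ g : V → ℤ, ∃ q : V → ℤ,
      (∀ α ∈ Ψ, ∀ β ∈ Ψ, q (β - cv α β • α) = q β - pairInt β α * q α) ∧
      ∀ γ ∈ Γ, q γ = g γ) :=
  stmt4_general Φ cv pairInt hpair Γ Ψ hli hΨΦ hΨcl hΓΨ hmin hspan p
end

section
/- For a root subsystem Ψ of Φ and a function N : Ψ → ℕ, α ↦ n_α, the following are equivalent: (i) n_β·ℤ − ⟨β,α∨⟩·(n_α·ℤ) ⊆ n_{s_α(β)}·ℤ for all α,β ∈ Ψ; (ii) n_β divides ⟨β,α∨⟩·n_α for all α,β ∈ Ψ, and n_{w(α)} = n_α for every α ∈ Ψ and every w in the group W_Ψ generated by {s_γ | γ ∈ Ψ} (note w(α) ∈ Ψ since Ψ is W_Ψ-stable); (iii) n_β·ℤ − ⟨β,α∨⟩·(n_α·ℤ) = n_{s_α(β)}·ℤ for all α,β ∈ Ψ. -/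
open Module Submodule

variable {V : Type*}

variable [AddCommGroup V] [Module ℝ V]

theorem stmt5
    (Φ : Set V) (cv : V → Module.Dual ℝ V) (pairInt : V → V → ℤ)
    (hne : ∀ α ∈ Φ, α ≠ 0)
    (h2 : ∀ α ∈ Φ, cv α α = 2)
    (hpair : ∀ α ∈ Φ, ∀ β ∈ Φ, (pairInt β α : ℝ) = cv α β)
    (hrefl : ∀ α ∈ Φ, (fun β => β - cv α β • α) '' Φ = Φ)
    (Ψ : Set V) (hΨΦ : Ψ ⊆ Φ) (hΨcl : ∀ α ∈ Ψ, ∀ β ∈ Ψ, β - cv α β • α ∈ Ψ)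
    (N : V → ℕ) :
    ((∀ α ∈ Ψ, ∀ β ∈ Ψ,
        zdiff (zmul (N β)) (pairInt β α) (zmul (N α)) ⊆ zmul (N (β - cv α β • α))) ↔
      ((∀ α ∈ Ψ, ∀ β ∈ Ψ, (N β : ℤ) ∣ pairInt β α * N α) ∧
        (∀ α ∈ Ψ, ∀ w ∈ WGroup cv Ψ (fun α hα => h2 α (hΨΦ hα)), N (w α) = N α))) ∧
    ((∀ α ∈ Ψ, ∀ β ∈ Ψ,
        zdiff (zmul (N β)) (pairInt β α) (zmul (N α)) ⊆ zmul (N (β - cv α β • α))) ↔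
      (∀ α ∈ Ψ, ∀ β ∈ Ψ,
        zdiff (zmul (N β)) (pairInt β α) (zmul (N α)) = zmul (N (β - cv α β • α)))) := by
  have h2' : ∀ α ∈ Ψ, cv α α = 2 := fun α hα => h2 α (hΨΦ hα)
  have hneg : ∀ α ∈ Ψ, ∀ β : V, cv α (β - cv α β • α) = - cv α β := by
    intro α hα β
    rw [map_sub, map_smul, smul_eq_mul, h2 α (hΨΦ hα)]
    ring
  have hinvol : ∀ α ∈ Ψ, ∀ β : V,
      (β - cv α β • α) - cv α (β - cv α β • α) • α = β := by
    intro α hα β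
    rw [hneg α hα]
    module
  -- from (i), N is reflection-invariant
  have keyEq : (∀ α ∈ Ψ, ∀ β ∈ Ψ,
      zdiff (zmul (N β)) (pairInt β α) (zmul (N α)) ⊆ zmul (N (β - cv α β • α))) →
      ∀ α ∈ Ψ, ∀ β ∈ Ψ, N (β - cv α β • α) = N β := by
    intro hi α hα β hβ
    have hβ' : β - cv α β • α ∈ Ψ := hΨcl α hα β hβ
    have d1 : (N (β - cv α β • α) : ℤ) ∣ (N β : ℤ) := by
      have := hi α hα β hβ ⟨(N β : ℤ), ⟨1, by ring⟩, 0, ⟨0, by ring⟩, by ring⟩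
      obtain ⟨k, hk⟩ := this
      exact ⟨k, hk⟩
    have d2 : (N β : ℤ) ∣ (N (β - cv α β • α) : ℤ) := by
      have := hi α hα _ hβ' ⟨(N (β - cv α β • α) : ℤ), ⟨1, by ring⟩, 0, ⟨0, by ring⟩,
        by ring⟩
      rw [hinvol α hα β] at this
      obtain ⟨k, hk⟩ := this
      exact ⟨k, hk⟩
    exact_mod_cast Nat.dvd_antisymm (by exact_mod_cast d1) (by exact_mod_cast d2)
  constructor
  · constructor
    · intro hi
      refine ⟨?_, ?_⟩
      · intro α hα β hβ
        have hmem : -(pairInt β α * (N α : ℤ)) ∈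
            zdiff (zmul (N β)) (pairInt β α) (zmul (N α)) :=
          ⟨0, ⟨0, by ring⟩, (N α : ℤ), ⟨1, by ring⟩, by ring⟩
        have := hi α hα β hβ hmem
        rw [keyEq hi α hα β hβ] at this
        obtain ⟨k, hk⟩ := this
        exact ⟨-k, by linarith⟩
      · intro α hα w hw
        have main : ∀ w ∈ WGroup cv Ψ (fun α hα => h2 α (hΨΦ hα)),
            (∀ γ ∈ Ψ, w γ ∈ Ψ ∧ N (w γ) = N γ) ∧
            (∀ γ ∈ Ψ, w⁻¹ γ ∈ Ψ ∧ N (w⁻¹ γ) = N γ) := by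
          intro w hw
          induction hw using Subgroup.closure_induction with
          | mem x hx =>
            obtain ⟨δ, hδ, rfl⟩ := hx
            have hfix : ∀ γ ∈ Ψ,
                Module.reflection (h2 δ (hΨΦ hδ)) γ ∈ Ψ ∧
                N (Module.reflection (h2 δ (hΨΦ hδ)) γ) = N γ := by
              intro γ hγ
              rw [Module.reflection_apply]
              exact ⟨hΨcl δ hδ γ hγ, keyEq hi δ hδ γ hγ⟩
            refine ⟨hfix, ?_⟩
            intro γ hγ
            have : (Module.reflection (h2 δ (hΨΦ hδ)))⁻¹ =
                Module.reflection (h2 δ (hΨΦ hδ)) := rfl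
            rw [this]
            exact hfix γ hγ
          | one => simp
          | mul x y hx hy ihx ihy =>
            refine ⟨fun γ hγ => ?_, fun γ hγ => ?_⟩
            · obtain ⟨hy1, hy2⟩ := ihy.1 γ hγ
              obtain ⟨hx1, hx2⟩ := ihx.1 _ hy1
              have hmul : (x * y) γ = x (y γ) := rfl
              rw [hmul]
              exact ⟨hx1, by rw [hx2, hy2]⟩
            · obtain ⟨hx1, hx2⟩ := ihx.2 γ hγ
              obtain ⟨hy1, hy2⟩ := ihy.2 _ hx1
              have : (x * y)⁻¹ γ = y⁻¹ (x⁻¹ γ) := by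
                rw [mul_inv_rev]; rfl
              refine ⟨by rw [this]; exact hy1, by rw [this, hy2, hx2]⟩
          | inv x hx ihx =>
            exact ⟨ihx.2, by simpa using ihx.1⟩
        exact ((main w hw).1 α hα).2
    · rintro ⟨hdvd, hW⟩ α hα β hβ
      have hsmem : Module.reflection (h2 α (hΨΦ hα)) ∈
          WGroup cv Ψ (fun α hα => h2 α (hΨΦ hα)) :=
        Subgroup.subset_closure ⟨α, hα, rfl⟩
      have hNeq : N (β - cv α β • α) = N β := by
        have := hW β hβ _ hsmem
        rwa [Module.reflection_apply] at this
      rintro z ⟨a, ⟨k, hk⟩, b, ⟨l, hl⟩, hz⟩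
      rw [hNeq]
      obtain ⟨m, hm⟩ := hdvd α hα β hβ
      exact ⟨k - m * l, by rw [hz, hk, hl]; linear_combination -l * hm⟩
  · constructor
    · intro hi α hα β hβ
      refine Set.Subset.antisymm (hi α hα β hβ) ?_
      rintro z ⟨k, hz⟩
      rw [keyEq hi α hα β hβ] at hz
      exact ⟨(N β : ℤ) * k, ⟨k, rfl⟩, 0, ⟨0, by ring⟩, by rw [hz]; ring⟩
    · intro he α hα β hβ
      rw [he α hα β hβ]
end

section
/- Let 𝒵 be a root function with support Ψ such that Z_α is a subgroup of ℤ for every α ∈ Ψ. Then there is a unique admissible subgroup X of Ω(Ψ) such that Z_α = X(α) for all α ∈ Ψ. -/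
open Module Submodule

variable {V : Type*}

variable [AddCommGroup V] [Module ℝ V]

/-! Write `Z α = n_α ℤ` on `Ψ`. The root-function inclusions for `(α, β)` and `(α, s_α β)` give
`n_{s_α β} = n_β` and `n_β ∣ ⟨β, α∨⟩ n_α`, so `n` is `W_Ψ`-invariant and
`X = {f | n_α ∣ f α for α ∈ Ψ}` is admissible. The point is that `X(α)` contains `n_α`.
Let `X_Γ = {f | n_γ ∣ f γ for γ ∈ Γ}`. The roots `α` with `X_Γ(α) = Z α` contain `Γ` (coordinate
functionals of the basis `Γ`) and form a root subsystem: if `X_Γ(α) = Z α`, then `f ↦ f ∘ s_α`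
preserves `X_Γ`, hence `X_Γ(s_α β) = X_Γ(β)`. By minimality this holds on all of `Ψ`, which
forces `X_Γ = X`. Uniqueness: an admissible subgroup is determined by the sets `X(α)`, `α ∈ Ψ`. -/

lemma mem_zmul_iff {n x : ℤ} : x ∈ zmul n ↔ n ∣ x := Iff.rfl

lemma dvd_and_dvd_of_zdiff_zmul_subset {a b c d : ℤ} (h : zdiff (zmul a) c (zmul b) ⊆ zmul d) :
    d ∣ a ∧ d ∣ c * b := by
  refine ⟨h ⟨a, dvd_refl a, 0, dvd_zero b, by ring⟩, ?_⟩
  simpa using mem_zmul_iff.mp (h ⟨0, dvd_zero a, b, dvd_refl b, rfl⟩)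

section Coweights

variable {M : Type*} [AddCommGroup M] {Γ : Set M}

def dvdCoweights {L : Submodule ℤ M} (S : Set M) (hS : ∀ α ∈ S, α ∈ L) (n : M → ℕ) :
    AddSubgroup (L →ₗ[ℤ] ℤ) where
  carrier := {f | ∀ α, ∀ hα : α ∈ S, (n α : ℤ) ∣ f ⟨α, hS α hα⟩}
  zero_mem' _ _ := dvd_zero _
  add_mem' hf hg α hα := dvd_add (hf α hα) (hg α hα)
  neg_mem' hf α hα := (dvd_neg).mpr (hf α hα)

lemma mem_dvdCoweights_iff_forall_mem_Xval {Ψ : Set M} {hspan : ∀ α ∈ Ψ, α ∈ span ℤ Γ}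
    {n : M → ℕ} {f : span ℤ Γ →ₗ[ℤ] ℤ} :
    f ∈ dvdCoweights Ψ hspan n ↔
      ∀ α (hα : α ∈ Ψ), f ⟨α, hspan α hα⟩ ∈ Xval Γ (dvdCoweights Ψ hspan n) (hspan α hα) := by
  refine ⟨fun hf α _ => ⟨f, hf, rfl⟩, fun hf α hα => ?_⟩
  obtain ⟨g, hg, hgf⟩ := hf α hα
  exact hgf ▸ hg α hα

lemma dvdCoweights_eq_of_Xval_eq {Ψ : Set M} {hspan : ∀ α ∈ Ψ, α ∈ span ℤ Γ} {N n : M → ℕ}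
    (h : ∀ α (hα : α ∈ Ψ), Xval Γ (dvdCoweights Ψ hspan N) (hspan α hα) =
      Xval Γ (dvdCoweights Ψ hspan n) (hspan α hα)) :
    dvdCoweights Ψ hspan N = dvdCoweights Ψ hspan n := by
  ext f
  simp only [mem_dvdCoweights_iff_forall_mem_Xval]
  exact forall_congr' fun α => forall_congr' fun hα => by rw [h α hα]

lemma Xval_eq_of_comp_mem {X : Set (span ℤ Γ →ₗ[ℤ] ℤ)} {r : span ℤ Γ →ₗ[ℤ] span ℤ Γ}
    (hr : ∀ g ∈ X, g ∘ₗ r ∈ X) {β s : M} (hβ : β ∈ span ℤ Γ) (hs : s ∈ span ℤ Γ)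
    (hrβ : r ⟨β, hβ⟩ = ⟨s, hs⟩) (hrs : r ⟨s, hs⟩ = ⟨β, hβ⟩) :
    Xval Γ X hs = Xval Γ X hβ := by
  ext z
  constructor
  · rintro ⟨g, hg, rfl⟩
    exact ⟨g ∘ₗ r, hr g hg, by rw [LinearMap.comp_apply, hrβ]⟩
  · rintro ⟨g, hg, rfl⟩
    exact ⟨g ∘ₗ r, hr g hg, by rw [LinearMap.comp_apply, hrs]⟩

lemma exists_coweight_apply_self_eq_one (hli : LinearIndependent ℤ (fun γ : Γ => (γ : M)))
    {γ₀ : M} (hγ₀ : γ₀ ∈ Γ) :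
    ∃ c : span ℤ Γ →ₗ[ℤ] ℤ, c ⟨γ₀, subset_span hγ₀⟩ = 1 ∧
      ∀ γ (hγ : γ ∈ Γ), γ ≠ γ₀ → c ⟨γ, subset_span hγ⟩ = 0 := by
  let b : Basis Γ ℤ (span ℤ Γ) :=
    (Basis.span hli).map (LinearEquiv.ofEq _ _ (by rw [Subtype.range_coe]))
  have hb : ∀ γ (hγ : γ ∈ Γ), b ⟨γ, hγ⟩ = ⟨γ, subset_span hγ⟩ := fun γ hγ =>
    Subtype.ext (by simp [b, Basis.span_apply])
  refine ⟨b.coord ⟨γ₀, hγ₀⟩, ?_, fun γ hγ hne => ?_⟩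
  · rw [← hb γ₀ hγ₀, Basis.coord_apply, b.repr_self, Finsupp.single_eq_same]
  · rw [← hb γ hγ, Basis.coord_apply, b.repr_self,
      Finsupp.single_eq_of_ne (Subtype.coe_ne_coe.mp hne.symm)]

lemma Xval_dvdCoweights_of_mem (hli : LinearIndependent ℤ (fun γ : Γ => (γ : M))) (n : M → ℕ)
    {γ₀ : M} (hγ₀ : γ₀ ∈ Γ) :
    Xval Γ (dvdCoweights Γ (fun _ h => subset_span h) n) (subset_span hγ₀) = zmul (n γ₀) := by
  ext z
  constructor
  · rintro ⟨g, hg, rfl⟩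
    exact hg γ₀ hγ₀
  · rintro ⟨k, rfl⟩
    obtain ⟨c, hc₀, hc⟩ := exists_coweight_apply_self_eq_one hli hγ₀
    refine ⟨(n γ₀ * k) • c, fun γ hγ => ?_, by simp [hc₀]⟩
    rw [LinearMap.smul_apply]
    obtain rfl | hne := eq_or_ne γ γ₀
    · rw [hc₀, smul_eq_mul, mul_one]
      exact dvd_mul_right _ _
    · simp [hc γ hγ hne]

end Coweights

section Lattice

variable {Γ : Set V}

lemma exists_intCast_eq_of_mem_span {f : Dual ℝ V} (hΓ : ∀ γ ∈ Γ, ∃ k : ℤ, (k : ℝ) = f γ)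
    {x : V} (hx : x ∈ span ℤ Γ) : ∃ k : ℤ, (k : ℝ) = f x := by
  induction hx using Submodule.span_induction with
  | mem x hx => exact hΓ x hx
  | zero => exact ⟨0, by simp⟩
  | add x y _ _ hx hy =>
    obtain ⟨a, ha⟩ := hx
    obtain ⟨b, hb⟩ := hy
    exact ⟨a + b, by push_cast; rw [ha, hb, map_add]⟩
  | smul a x _ hx =>
    obtain ⟨k, hk⟩ := hx
    exact ⟨a * k, by push_cast; rw [hk, map_zsmul, zsmul_eq_mul]⟩

lemma preReflection_mem_span {f : Dual ℝ V} (hΓ : ∀ γ ∈ Γ, ∃ k : ℤ, (k : ℝ) = f γ) {α x : V}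
    (hα : α ∈ span ℤ Γ) (hx : x ∈ span ℤ Γ) : preReflection α f x ∈ span ℤ Γ := by
  obtain ⟨k, hk⟩ := exists_intCast_eq_of_mem_span hΓ hx
  rw [preReflection_apply, ← hk, Int.cast_smul_eq_zsmul]
  exact sub_mem hx (zsmul_mem hα k)

def spanPreReflection {f : Dual ℝ V} (hΓ : ∀ γ ∈ Γ, ∃ k : ℤ, (k : ℝ) = f γ) {α : V}
    (hα : α ∈ span ℤ Γ) : span ℤ Γ →ₗ[ℤ] span ℤ Γ :=
  ((preReflection α f).restrictScalars ℤ).restrict fun _ hx => preReflection_mem_span hΓ hα hx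

lemma coe_spanPreReflection_apply {f : Dual ℝ V} (hΓ : ∀ γ ∈ Γ, ∃ k : ℤ, (k : ℝ) = f γ)
    {α : V} (hα : α ∈ span ℤ Γ) (x : span ℤ Γ) :
    (spanPreReflection hΓ hα x : V) = x - f x • α :=
  preReflection_apply α f x

lemma comp_spanPreReflection_mem_dvdCoweights {f : Dual ℝ V} {k : V → ℤ}
    (hk : ∀ γ ∈ Γ, (k γ : ℝ) = f γ) {α : V} (hα : α ∈ span ℤ Γ) {n : V → ℕ}
    (hdvd : ∀ γ ∈ Γ, (n γ : ℤ) ∣ k γ * n α) {g : span ℤ Γ →ₗ[ℤ] ℤ}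
    (hg : g ∈ dvdCoweights Γ (fun _ h => subset_span h) n) (hgα : (n α : ℤ) ∣ g ⟨α, hα⟩) :
    g ∘ₗ spanPreReflection (fun γ hγ => ⟨k γ, hk γ hγ⟩) hα ∈
      dvdCoweights Γ (fun _ h => subset_span h) n := by
  intro γ hγ
  have hrγ : spanPreReflection (fun γ hγ => ⟨k γ, hk γ hγ⟩) hα ⟨γ, subset_span hγ⟩ =
      ⟨γ, subset_span hγ⟩ - k γ • ⟨α, hα⟩ := by
    ext
    rw [coe_spanPreReflection_apply, ← hk γ hγ, Int.cast_smul_eq_zsmul]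
    rfl
  rw [LinearMap.comp_apply, hrγ, map_sub, map_zsmul, smul_eq_mul]
  exact dvd_sub (hg γ hγ) ((hdvd γ hγ).trans (mul_dvd_mul_left _ hgα))

end Lattice

section RootFunction

variable {Φ Ψ Γ : Set V} {cv : V → Dual ℝ V} {pairInt : V → V → ℤ} {Z : V → Set ℤ}

theorem IsRootFunction.mult_reflection_eq_and_dvd (hZ : IsRootFunction Φ cv pairInt Z)
    {n : V → ℕ} (hn : ∀ α ∈ Ψ, Z α = zmul (n α)) (hΨΦ : Ψ ⊆ Φ)
    (hΨcl : ∀ α ∈ Ψ, ∀ β ∈ Ψ, β - cv α β • α ∈ Ψ) (h2 : ∀ α ∈ Ψ, cv α α = 2)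
    {α β : V} (hα : α ∈ Ψ) (hβ : β ∈ Ψ) :
    n (β - cv α β • α) = n β ∧ (n β : ℤ) ∣ pairInt β α * n α := by
  set s := β - cv α β • α
  have hs : s ∈ Ψ := hΨcl α hα β hβ
  have hss : s - cv α s • α = β := involutive_reflection (h2 α hα) β
  have h₁ := hZ α (hΨΦ hα) β (hΨΦ hβ)
  have h₂ := hZ α (hΨΦ hα) s (hΨΦ hs)
  rw [hss] at h₂
  rw [hn α hα, hn β hβ, hn s hs] at h₁ h₂
  obtain ⟨hsβ, hsα⟩ := dvd_and_dvd_of_zdiff_zmul_subset h₁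
  have heq : n s = n β := Nat.dvd_antisymm (Int.natCast_dvd_natCast.mp hsβ)
    (Int.natCast_dvd_natCast.mp (dvd_and_dvd_of_zdiff_zmul_subset h₂).1)
  exact ⟨heq, heq ▸ hsα⟩

theorem mapsTo_and_eq_of_mem_WGroup {ι : Type*} {n : V → ι} (h2 : ∀ α ∈ Ψ, cv α α = 2)
    (hΨcl : ∀ α ∈ Ψ, ∀ β ∈ Ψ, β - cv α β • α ∈ Ψ)
    (hn : ∀ α ∈ Ψ, ∀ β ∈ Ψ, n (β - cv α β • α) = n β) {w : V ≃ₗ[ℝ] V}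
    (hw : w ∈ WGroup cv Ψ h2) : ∀ α ∈ Ψ, w α ∈ Ψ ∧ n (w α) = n α := by
  induction hw using Subgroup.closure_induction'' with
  | mem x hx | inv_mem x hx =>
    obtain ⟨β, hβ, rfl⟩ := hx
    exact fun α hα => ⟨hΨcl β hβ α hα, hn β hβ α hα⟩
  | one => exact fun α hα => ⟨hα, rfl⟩
  | mul x y _ _ hx hy =>
    intro α hα
    obtain ⟨hyα, hnyα⟩ := hy α hα
    obtain ⟨hxyα, hnxyα⟩ := hx _ hyα
    exact ⟨hxyα, hnxyα.trans hnyα⟩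

theorem isRootSubsystem_setOf_Xval_eq {n : V → ℕ} (hZ : IsRootFunction Φ cv pairInt Z)
    (hn : ∀ α ∈ Ψ, Z α = zmul (n α)) (hΨΦ : Ψ ⊆ Φ)
    (hΨcl : ∀ α ∈ Ψ, ∀ β ∈ Ψ, β - cv α β • α ∈ Ψ) (h2 : ∀ α ∈ Ψ, cv α α = 2)
    (hpair : ∀ α ∈ Ψ, ∀ β ∈ Ψ, (pairInt β α : ℝ) = cv α β) (hΓΨ : Γ ⊆ Ψ)
    (hspan : ∀ α ∈ Ψ, α ∈ span ℤ Γ) :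
    IsRootSubsystem Φ cv {α | ∃ hα : α ∈ Ψ,
      Xval Γ (dvdCoweights Γ (fun _ h => subset_span h) n) (hspan α hα) = Z α} := by
  refine ⟨fun α ⟨hα, _⟩ => hΨΦ hα, ?_⟩
  rintro α ⟨hα, hXα⟩ β ⟨hβ, hXβ⟩
  have hmult := fun {β} (hβ : β ∈ Ψ) => hZ.mult_reflection_eq_and_dvd hn hΨΦ hΨcl h2 hα hβ
  have hs := hΨcl α hα β hβ
  let r := spanPreReflection (fun γ hγ => ⟨pairInt γ α, hpair α hα γ (hΓΨ hγ)⟩) (hspan α hα)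
  have hr : ∀ g ∈ dvdCoweights Γ (fun _ h => subset_span h) n,
      g ∘ₗ r ∈ dvdCoweights Γ (fun _ h => subset_span h) n := by
    intro g hg
    have hgα : g ⟨α, hspan α hα⟩ ∈ Z α := hXα ▸ ⟨g, hg, rfl⟩
    rw [hn α hα] at hgα
    exact comp_spanPreReflection_mem_dvdCoweights (fun γ hγ => hpair α hα γ (hΓΨ hγ)) _
      (fun γ hγ => (hmult (hΓΨ hγ)).2) hg hgα
  have hrβ : r ⟨β, hspan β hβ⟩ = ⟨_, hspan _ hs⟩ :=
    Subtype.ext (coe_spanPreReflection_apply _ _ _)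
  have hrs : r ⟨_, hspan _ hs⟩ = ⟨β, hspan β hβ⟩ :=
    Subtype.ext ((coe_spanPreReflection_apply _ _ _).trans (involutive_reflection (h2 α hα) β))
  refine ⟨hs, ?_⟩
  rw [Xval_eq_of_comp_mem hr _ _ hrβ hrs, hXβ, hn β hβ, hn _ hs, (hmult hβ).1]

end RootFunction

theorem stmt10_general
    (Φ : Set V) (cv : V → Module.Dual ℝ V) (pairInt : V → V → ℤ)
    (h2 : ∀ α ∈ Φ, cv α α = 2)
    (hpair : ∀ α ∈ Φ, ∀ β ∈ Φ, (pairInt β α : ℝ) = cv α β)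
    (Γ Ψ : Set V)
    (hli : LinearIndependent ℝ (fun γ : Γ => (γ : V)))
    (hΨΦ : Ψ ⊆ Φ) (hΨcl : ∀ α ∈ Ψ, ∀ β ∈ Ψ, β - cv α β • α ∈ Ψ)
    (hΓΨ : Γ ⊆ Ψ)
    (hmin : ∀ Ψ', IsRootSubsystem Φ cv Ψ' → Γ ⊆ Ψ' → Ψ ⊆ Ψ')
    (hspan : ∀ α ∈ Ψ, α ∈ span ℤ Γ)
    (Z : V → Set ℤ) (hZ : IsRootFunction Φ cv pairInt Z)
    (hgrp : ∀ α ∈ Ψ, ∃ n : ℕ, Z α = zmul n) :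
    ∃! X : AddSubgroup (span ℤ Γ →ₗ[ℤ] ℤ),
      IsAdmissibleSubgroup cv pairInt Γ Ψ (fun α hα => h2 α (hΨΦ hα)) hspan X ∧
      ∀ α, ∀ hα : α ∈ Ψ,
        Z α = Xval Γ (X : Set (span ℤ Γ →ₗ[ℤ] ℤ)) (hspan α hα) := by
  choose! n hn using hgrp
  have h2Ψ : ∀ α ∈ Ψ, cv α α = 2 := fun α hα => h2 α (hΨΦ hα)
  have hmult := fun α (hα : α ∈ Ψ) β (hβ : β ∈ Ψ) =>
    hZ.mult_reflection_eq_and_dvd hn hΨΦ hΨcl h2Ψ hα hβ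
  have hXΓ : ∀ α (hα : α ∈ Ψ),
      Xval Γ (dvdCoweights Γ (fun _ h => subset_span h) n) (hspan α hα) = Z α := fun α hα =>
    (hmin _ (isRootSubsystem_setOf_Xval_eq hZ hn hΨΦ hΨcl h2Ψ
      (fun α hα β hβ => hpair α (hΨΦ hα) β (hΨΦ hβ)) hΓΨ hspan)
      (fun γ hγ => ⟨hΓΨ hγ, (Xval_dvdCoweights_of_mem (hli.restrict_scalars' ℤ) n hγ).trans
        (hn γ (hΓΨ hγ)).symm⟩) hα).2
  have hX : dvdCoweights Γ (fun _ h => subset_span h) n = dvdCoweights Ψ hspan n := by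
    refine le_antisymm (fun f hf α hα => ?_) (fun f hf γ hγ => hf γ (hΓΨ hγ))
    have hfα : f ⟨α, hspan α hα⟩ ∈ Z α := hXΓ α hα ▸ ⟨f, hf, rfl⟩
    rwa [hn α hα] at hfα
  refine ⟨dvdCoweights Ψ hspan n, ⟨?_, fun α hα => by rw [← hX, hXΓ α hα]⟩, ?_⟩
  · refine ⟨n, fun α hα β hβ => (hmult α hα β hβ).2, fun α hα w hw => ?_, rfl⟩
    exact (mapsTo_and_eq_of_mem_WGroup h2Ψ hΨcl (fun α hα β hβ => (hmult α hα β hβ).1) hw α hα).2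
  rintro X ⟨⟨N, -, -, hN⟩, hXZ⟩
  obtain rfl : X = dvdCoweights Ψ hspan N := SetLike.coe_injective hN
  exact dvdCoweights_eq_of_Xval_eq fun α hα => by rw [← hXZ α hα, ← hX, hXΓ α hα]

theorem stmt10
    (Φ : Set V) (cv : V → Module.Dual ℝ V) (pairInt : V → V → ℤ)
    (hne : ∀ α ∈ Φ, α ≠ 0)
    (h2 : ∀ α ∈ Φ, cv α α = 2)
    (hpair : ∀ α ∈ Φ, ∀ β ∈ Φ, (pairInt β α : ℝ) = cv α β)
    (hrefl : ∀ α ∈ Φ, (fun β => β - cv α β • α) '' Φ = Φ)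
    (Γ Ψ : Set V) (hΓΦ : Γ ⊆ Φ)
    (hli : LinearIndependent ℝ (fun γ : Γ => (γ : V)))
    (hΨΦ : Ψ ⊆ Φ) (hΨcl : ∀ α ∈ Ψ, ∀ β ∈ Ψ, β - cv α β • α ∈ Ψ)
    (hΓΨ : Γ ⊆ Ψ)
    (hmin : ∀ Ψ', IsRootSubsystem Φ cv Ψ' → Γ ⊆ Ψ' → Ψ ⊆ Ψ')
    (hspan : ∀ α ∈ Ψ, α ∈ span ℤ Γ)
    (Z : V → Set ℤ) (hZ : IsRootFunction Φ cv pairInt Z)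
    (hsupp : {α ∈ Φ | Z α ≠ ∅} = Ψ)
    (hgrp : ∀ α ∈ Ψ, ∃ n : ℕ, Z α = zmul n) :
    ∃! X : AddSubgroup (span ℤ Γ →ₗ[ℤ] ℤ),
      IsAdmissibleSubgroup cv pairInt Γ Ψ (fun α hα => h2 α (hΨΦ hα)) hspan X ∧
      ∀ α, ∀ hα : α ∈ Ψ,
        Z α = Xval Γ (X : Set (span ℤ Γ →ₗ[ℤ] ℤ)) (hspan α hα) :=
  stmt10_general Φ cv pairInt h2 hpair Γ Ψ hli hΨΦ hΨcl hΓΨ hmin hspan Z hZ hgrp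
end

section
/- Let Γ ⊆ Φ and let Ψ be the smallest root subsystem of Φ containing Γ. Let 𝒵 be a root function with support Ψ such that 0 ∈ Z_α for all α ∈ Γ. Then for every α ∈ Ψ, Z_α is a subgroup of ℤ, i.e. Z_α = n_α·ℤ for some n_α ∈ ℕ. -/
open Module Submodule

variable {V : Type*}

variable [AddCommGroup V] [Module ℝ V]

/-! The set `{α ∈ Φ | 0 ∈ Z_α}` is a root subsystem, so by minimality it contains `Ψ`.
For such `α` the reflection `s_α` maps `α` to `-α` and `⟨α,α∨⟩ = 2`, so `Z_α - 2·Z_α ⊆ Z_{-α}`;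
in particular `0 ∈ Z_{-α}`, and then `s_{-α}` applied with `0 ∈ Z_{-α}` gives `Z_{-α} ⊆ Z_α`.
Hence `Z_α` contains `0` and is closed under `(a, b) ↦ a - 2b`. Such a set of integers is a
subgroup: it is a union of cosets of `2H` in the subgroup `H = dℤ` it generates, and it cannot
avoid the coset of `d`, since otherwise it would generate a subgroup of `2dℤ`. -/

theorem add_two_mul_mem_of_mem_closure {A : Set ℤ}
    (hA : ∀ a ∈ A, ∀ b ∈ A, a - 2 * b ∈ A) {g : ℤ} (hg : g ∈ AddSubgroup.closure A)
    {a : ℤ} (ha : a ∈ A) : a + 2 * g ∈ A := by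
  have hneg {b : ℤ} (hb : b ∈ A) : -b ∈ A := by simpa [two_mul] using hA b hb b hb
  let G : AddSubgroup ℤ :=
    { carrier := {g | ∀ a ∈ A, a + 2 * g ∈ A}
      zero_mem' := fun a ha => by simpa using ha
      add_mem' := fun hx hy a ha => by simpa [mul_add, add_assoc] using hy _ (hx a ha)
      neg_mem' := fun hx a ha => by convert hneg (hx _ (hneg ha)) using 1; ring }
  have hAG : A ⊆ G := fun b hb a ha => by simpa using hA a ha (-b) (hneg hb)
  exact (AddSubgroup.closure_le G).2 hAG hg a ha

theorem exists_eq_zmul_of_sub_two_mul_mem {A : Set ℤ} (h0 : (0 : ℤ) ∈ A)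
    (hA : ∀ a ∈ A, ∀ b ∈ A, a - 2 * b ∈ A) : ∃ n : ℕ, A = zmul n := by
  obtain ⟨d, hd⟩ := Int.subgroup_cyclic (AddSubgroup.closure A)
  rw [← AddSubgroup.zmultiples_eq_closure] at hd
  have mem_closure_iff (z : ℤ) : z ∈ AddSubgroup.closure A ↔ d ∣ z := by
    rw [hd, Int.mem_zmultiples_iff]
  have translate {a : ℤ} (ha : a ∈ A) (j : ℤ) : a + 2 * (d * j) ∈ A :=
    add_two_mul_mem_of_mem_closure hA ((mem_closure_iff _).2 (dvd_mul_right d j)) ha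
  have hdA : d ∈ A := by
    by_contra hdA
    have hle : AddSubgroup.closure A ≤ AddSubgroup.zmultiples (2 * d) := by
      refine (AddSubgroup.closure_le _).2 fun a ha => ?_
      obtain ⟨k, rfl⟩ := (mem_closure_iff a).1 (AddSubgroup.subset_closure ha)
      obtain ⟨j, rfl | rfl⟩ := Int.even_or_odd' k
      · exact Int.mem_zmultiples_iff.2 ⟨j, by ring⟩
      · exact (hdA (by convert translate ha (-j) using 1; ring)).elim
    obtain ⟨c, hc⟩ := Int.mem_zmultiples_iff.1 (hle ((mem_closure_iff d).2 dvd_rfl))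
    have hd0 : d = 0 := by
      have : d * (2 * c - 1) = 0 := by linarith
      exact (mul_eq_zero.1 this).resolve_right (by omega)
    exact hdA (hd0 ▸ h0)
  refine ⟨d.natAbs, Set.ext fun z => ?_⟩
  change z ∈ A ↔ (d.natAbs : ℤ) ∣ z
  rw [Int.natAbs_dvd, ← mem_closure_iff]
  refine ⟨fun hz => AddSubgroup.subset_closure hz, fun hz => ?_⟩
  obtain ⟨k, rfl⟩ := (mem_closure_iff z).1 hz
  obtain ⟨j, rfl | rfl⟩ := Int.even_or_odd' k
  · simpa [mul_left_comm] using translate h0 j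
  · simpa [mul_add, mul_left_comm, add_comm] using translate hdA j

section RootFunction

variable {Φ : Set V} {cv : V → Module.Dual ℝ V} {pairInt : V → V → ℤ} {Z : V → Set ℤ}

theorem sub_smul_self_eq_neg {α : V} (h2 : cv α α = 2) : α - cv α α • α = -α := by
  rw [h2, two_smul]
  abel

theorem neg_mem_of_reflection_image_eq {α : V} (h2 : cv α α = 2)
    (hrefl : (fun β => β - cv α β • α) '' Φ = Φ) (hα : α ∈ Φ) : -α ∈ Φ :=
  hrefl ▸ ⟨α, hα, sub_smul_self_eq_neg h2⟩

theorem IsRootFunction.isRootSubsystem_setOf_zero_mem (hZ : IsRootFunction Φ cv pairInt Z)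
    (hrefl : ∀ α ∈ Φ, (fun β => β - cv α β • α) '' Φ = Φ) :
    IsRootSubsystem Φ cv {α ∈ Φ | (0 : ℤ) ∈ Z α} :=
  ⟨fun _ hα => hα.1, fun α hα β hβ =>
    ⟨hrefl α hα.1 ▸ ⟨β, hβ.1, rfl⟩, hZ α hα.1 β hβ.1 ⟨0, hβ.2, 0, hα.2, by ring⟩⟩⟩

theorem IsRootFunction.sub_two_mul_mem_neg (hZ : IsRootFunction Φ cv pairInt Z) {α : V}
    (hα : α ∈ Φ) (h2 : cv α α = 2) (hpair : (pairInt α α : ℝ) = cv α α)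
    {a b : ℤ} (ha : a ∈ Z α) (hb : b ∈ Z α) : a - 2 * b ∈ Z (-α) := by
  have hpair2 : pairInt α α = 2 := by exact_mod_cast hpair.trans h2
  rw [← sub_smul_self_eq_neg h2]
  exact hZ α hα α hα ⟨a, ha, b, hb, by rw [hpair2]⟩

theorem IsRootFunction.exists_eq_zmul_of_zero_mem (hZ : IsRootFunction Φ cv pairInt Z)
    (h2 : ∀ α ∈ Φ, cv α α = 2) (hpair : ∀ α ∈ Φ, (pairInt α α : ℝ) = cv α α)
    {α : V} (hα : α ∈ Φ) (hnα : -α ∈ Φ) (h0 : (0 : ℤ) ∈ Z α) : ∃ n : ℕ, Z α = zmul n := by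
  have step {β : V} (hβ : β ∈ Φ) {a b : ℤ} (ha : a ∈ Z β) (hb : b ∈ Z β) :
      a - 2 * b ∈ Z (-β) :=
    hZ.sub_two_mul_mem_neg hβ (h2 β hβ) (hpair β hβ) ha hb
  have h0neg : (0 : ℤ) ∈ Z (-α) := by simpa using step hα h0 h0
  have hsub : Z (-α) ⊆ Z α := fun a ha => by simpa using step hnα ha h0neg
  exact exists_eq_zmul_of_sub_two_mul_mem h0 fun a ha b hb => hsub (step hα ha hb)

end RootFunction

theorem stmt11_general
    (Φ : Set V) (cv : V → Module.Dual ℝ V) (pairInt : V → V → ℤ)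
    (h2 : ∀ α ∈ Φ, cv α α = 2)
    (hpair : ∀ α ∈ Φ, ∀ β ∈ Φ, (pairInt β α : ℝ) = cv α β)
    (hrefl : ∀ α ∈ Φ, (fun β => β - cv α β • α) '' Φ = Φ)
    (Γ Ψ : Set V) (hΓΦ : Γ ⊆ Φ)
    (hmin : ∀ Ψ', IsRootSubsystem Φ cv Ψ' → Γ ⊆ Ψ' → Ψ ⊆ Ψ')
    (Z : V → Set ℤ) (hZ : IsRootFunction Φ cv pairInt Z)
    (h0 : ∀ α ∈ Γ, (0 : ℤ) ∈ Z α) :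
    ∀ α ∈ Ψ, ∃ n : ℕ, Z α = zmul n := by
  intro α hα
  obtain ⟨hαΦ, h0α⟩ : α ∈ Φ ∧ (0 : ℤ) ∈ Z α :=
    hmin _ (hZ.isRootSubsystem_setOf_zero_mem hrefl) (fun γ hγ => ⟨hΓΦ hγ, h0 γ hγ⟩) hα
  exact hZ.exists_eq_zmul_of_zero_mem h2 (fun β hβ => hpair β hβ β hβ) hαΦ
    (neg_mem_of_reflection_image_eq (h2 α hαΦ) (hrefl α hαΦ) hαΦ) h0α

theorem stmt11
    (Φ : Set V) (cv : V → Module.Dual ℝ V) (pairInt : V → V → ℤ)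
    (hne : ∀ α ∈ Φ, α ≠ 0)
    (h2 : ∀ α ∈ Φ, cv α α = 2)
    (hpair : ∀ α ∈ Φ, ∀ β ∈ Φ, (pairInt β α : ℝ) = cv α β)
    (hrefl : ∀ α ∈ Φ, (fun β => β - cv α β • α) '' Φ = Φ)
    (Γ Ψ : Set V) (hΓΦ : Γ ⊆ Φ)
    (hΨ : IsRootSubsystem Φ cv Ψ) (hΓΨ : Γ ⊆ Ψ)
    (hmin : ∀ Ψ', IsRootSubsystem Φ cv Ψ' → Γ ⊆ Ψ' → Ψ ⊆ Ψ')
    (Z : V → Set ℤ) (hZ : IsRootFunction Φ cv pairInt Z)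
    (hsupp : {α ∈ Φ | Z α ≠ ∅} = Ψ)
    (h0 : ∀ α ∈ Γ, (0 : ℤ) ∈ Z α) :
    ∀ α ∈ Ψ, ∃ n : ℕ, Z α = zmul n :=
  stmt11_general Φ cv pairInt h2 hpair hrefl Γ Ψ hΓΦ hmin Z hZ h0
end

section
/- Let X be an admissible subgroup of Ω(Ψ) and x ∈ Ω(Ψ). Define 𝒵 : Φ → 𝒫(ℤ) by Z_α := {x(α) + f(α) | f ∈ X} for α ∈ Ψ and Z_α := ∅ for α ∈ Φ \ Ψ. Then 𝒵 is a root function with support Ψ. -/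
open Module Submodule

variable {V : Type*}

variable [AddCommGroup V] [Module ℝ V]

theorem stmt13
    (Φ : Set V) (cv : V → Module.Dual ℝ V) (pairInt : V → V → ℤ)
    (hne : ∀ α ∈ Φ, α ≠ 0)
    (h2 : ∀ α ∈ Φ, cv α α = 2)
    (hpair : ∀ α ∈ Φ, ∀ β ∈ Φ, (pairInt β α : ℝ) = cv α β)
    (hrefl : ∀ α ∈ Φ, (fun β => β - cv α β • α) '' Φ = Φ)
    (Γ Ψ : Set V) (hΓΦ : Γ ⊆ Φ)
    (hli : LinearIndependent ℝ (fun γ : Γ => (γ : V)))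
    (hΨΦ : Ψ ⊆ Φ) (hΨcl : ∀ α ∈ Ψ, ∀ β ∈ Ψ, β - cv α β • α ∈ Ψ)
    (hΓΨ : Γ ⊆ Ψ)
    (hmin : ∀ Ψ', IsRootSubsystem Φ cv Ψ' → Γ ⊆ Ψ' → Ψ ⊆ Ψ')
    (hspan : ∀ α ∈ Ψ, α ∈ span ℤ Γ)
    (X : AddSubgroup (span ℤ Γ →ₗ[ℤ] ℤ))
    (hX : IsAdmissibleSubgroup cv pairInt Γ Ψ (fun α hα => h2 α (hΨΦ hα)) hspan X)
    (x : span ℤ Γ →ₗ[ℤ] ℤ)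
    (Z : V → Set ℤ)
    (hZ1 : ∀ α, ∀ hα : α ∈ Ψ,
      Z α = {z : ℤ | ∃ f ∈ X, z = x ⟨α, hspan α hα⟩ + f ⟨α, hspan α hα⟩})
    (hZ2 : ∀ α, α ∉ Ψ → Z α = ∅) :
    IsRootFunction Φ cv pairInt Z ∧ {α ∈ Φ | Z α ≠ ∅} = Ψ := by
  classical
  obtain ⟨N, hN1, hN2, hXeq⟩ := hX
  -- the reflection s_α preserves the lattice span ℤ Γ
  have key : ∀ α, ∀ _ : α ∈ Ψ, ∀ v ∈ span ℤ Γ, v - cv α v • α ∈ span ℤ Γ := by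
    intro α hα v hv
    induction hv using Submodule.span_induction with
    | mem γ hγ =>
      have hc : cv α γ • α = (pairInt γ α) • α := by
        rw [← hpair α (hΨΦ hα) γ (hΓΦ hγ), Int.cast_smul_eq_zsmul]
      rw [hc]
      exact sub_mem (Submodule.subset_span hγ) (Submodule.smul_mem _ _ (hspan α hα))
    | zero => simpa using zero_mem _
    | add u w hu hw ihu ihw =>
      have hc : (u + w) - cv α (u + w) • α = (u - cv α u • α) + (w - cv α w • α) := by
        rw [map_add, add_smul]; abel
      rw [hc]; exact add_mem ihu ihw
    | smul n u hu ihu =>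
      have hc : (n • u) - cv α (n • u) • α = n • (u - cv α u • α) := by
        have e1 := Module.reflection_apply (x := α) (f := cv α) u (h2 α (hΨΦ hα))
        have e2 := Module.reflection_apply (x := α) (f := cv α) (n • u) (h2 α (hΨΦ hα))
        rw [← e1, ← e2, map_zsmul]
      rw [hc]; exact Submodule.smul_mem _ _ ihu
  -- the reflection as a ℤ-linear endomorphism of the lattice
  have σdef : ∀ α, ∀ hα : α ∈ Ψ, ∃ σ : span ℤ Γ →ₗ[ℤ] span ℤ Γ,
      ∀ v : span ℤ Γ, (σ v : V) = (v : V) - cv α (v : V) • α := by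
    intro α hα
    refine ⟨{ toFun := fun v => ⟨(v : V) - cv α (v : V) • α, key α hα v v.2⟩,
              map_add' := ?_, map_smul' := ?_ }, fun v => rfl⟩
    · intro u w
      apply Subtype.ext
      show ((u : V) + w) - cv α ((u : V) + w) • α = ((u : V) - cv α u • α) + ((w : V) - cv α w • α)
      rw [map_add, add_smul]; abel
    · intro n u
      apply Subtype.ext
      show ((n • u : span ℤ Γ) : V) - cv α ((n • u : span ℤ Γ) : V) • α
          = n • ((u : V) - cv α (u : V) • α)
      have e1 := Module.reflection_apply (x := α) (f := cv α) (u : V) (h2 α (hΨΦ hα))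
      have e2 := Module.reflection_apply (x := α) (f := cv α) (n • (u : V)) (h2 α (hΨΦ hα))
      rw [Submodule.coe_smul, ← e1, ← e2, map_zsmul]
  -- pullback along σ preserves X
  have pullback : ∀ α, ∀ hα : α ∈ Ψ, ∀ σ : span ℤ Γ →ₗ[ℤ] span ℤ Γ,
      (∀ v : span ℤ Γ, (σ v : V) = (v : V) - cv α (v : V) • α) →
      ∀ f ∈ X, f ∘ₗ σ ∈ X := by
    intro α hα σ hσ f hf
    have hf' : ∀ γ, ∀ hγ : γ ∈ Ψ, (N γ : ℤ) ∣ f ⟨γ, hspan γ hγ⟩ := by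
      have hmem : f ∈ (X : Set (span ℤ Γ →ₗ[ℤ] ℤ)) := hf
      rw [hXeq] at hmem
      exact hmem
    have hmem : (f ∘ₗ σ : span ℤ Γ →ₗ[ℤ] ℤ) ∈
        {g : span ℤ Γ →ₗ[ℤ] ℤ | ∀ γ, ∀ hγ : γ ∈ Ψ, (N γ : ℤ) ∣ g ⟨γ, hspan γ hγ⟩} := by
      intro γ hγ
      have hsγ : γ - cv α γ • α ∈ Ψ := hΨcl α hα γ hγ
      have hw : Module.reflection (h2 α (hΨΦ hα)) ∈
          WGroup cv Ψ (fun α hα => h2 α (hΨΦ hα)) :=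
        Subgroup.subset_closure ⟨α, hα, rfl⟩
      have hNeq : N (γ - cv α γ • α) = N γ := by
        have := hN2 γ hγ _ hw
        rwa [Module.reflection_apply] at this
      have hval : σ ⟨γ, hspan γ hγ⟩ = ⟨γ - cv α γ • α, hspan _ hsγ⟩ :=
        Subtype.ext (hσ _)
      show (N γ : ℤ) ∣ f (σ ⟨γ, hspan γ hγ⟩)
      rw [hval, ← hNeq]
      exact hf' _ hsγ
    rw [← hXeq] at hmem
    exact hmem
  constructor
  · -- root function property
    intro α hαΦ β hβΦ z hz
    obtain ⟨a, ha, b, hb, rfl⟩ := hz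
    by_cases hαΨ : α ∈ Ψ
    · by_cases hβΨ : β ∈ Ψ
      · have hsβ : β - cv α β • α ∈ Ψ := hΨcl α hαΨ β hβΨ
        rw [hZ1 β hβΨ] at ha
        rw [hZ1 α hαΨ] at hb
        obtain ⟨f, hf, rfl⟩ := ha
        obtain ⟨g, hg, rfl⟩ := hb
        obtain ⟨σ, hσ⟩ := σdef α hαΨ
        set c : ℤ := pairInt β α with hc
        set α' : span ℤ Γ := ⟨α, hspan α hαΨ⟩
        set β' : span ℤ Γ := ⟨β, hspan β hβΨ⟩
        set sβ' : span ℤ Γ := ⟨β - cv α β • α, hspan _ hsβ⟩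
        have hσβ : σ β' = sβ' := Subtype.ext (hσ β')
        have hsum : sβ' = β' - c • α' := by
          apply Subtype.ext
          show β - cv α β • α = β - c • α
          rw [← hpair α hαΦ β hβΦ, Int.cast_smul_eq_zsmul]
        have hσα : σ α' = -α' := by
          apply Subtype.ext
          show (σ α' : V) = -α
          rw [hσ α']
          show α - cv α α • α = -α
          rw [h2 α hαΦ]
          rw [two_smul]; abel
        have hσσ : σ sβ' = β' := by
          rw [hsum, map_sub, map_smul, hσβ, hσα, hsum]
          simp only [smul_neg]
          abel
        refine Set.mem_setOf_eq ▸ ?_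
        rw [hZ1 _ hsβ]
        refine ⟨f ∘ₗ σ + g - g ∘ₗ σ, ?_, ?_⟩
        · exact sub_mem (add_mem (pullback α hαΨ σ hσ f hf) hg) (pullback α hαΨ σ hσ g hg)
        · have hx : x sβ' = x β' - c * x α' := by
            rw [hsum, map_sub, map_smul, smul_eq_mul]
          have hg' : g sβ' = g β' - c * g α' := by
            rw [hsum, map_sub, map_smul, smul_eq_mul]
          have hh : (f ∘ₗ σ + g - g ∘ₗ σ) sβ' = f β' - c * g α' := by
            simp only [LinearMap.sub_apply, LinearMap.add_apply, LinearMap.comp_apply,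
              hσβ, hσσ]
            rw [hg']; ring
          rw [hx, hh]; ring
      · rw [hZ2 β hβΨ] at ha
        exact absurd ha (Set.notMem_empty _)
    · rw [hZ2 α hαΨ] at hb
      exact absurd hb (Set.notMem_empty _)
  · -- support
    ext α
    constructor
    · rintro ⟨hαΦ, hne'⟩
      by_contra hαΨ
      exact hne' (hZ2 α hαΨ)
    · intro hαΨ
      refine ⟨hΨΦ hαΨ, ?_⟩
      rw [hZ1 α hαΨ]
      intro hempty
      have : x ⟨α, hspan α hαΨ⟩ + (0 : span ℤ Γ →ₗ[ℤ] ℤ) ⟨α, hspan α hαΨ⟩ ∈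
          {z : ℤ | ∃ f ∈ X, z = x ⟨α, hspan α hαΨ⟩ + f ⟨α, hspan α hαΨ⟩} :=
        ⟨0, zero_mem X, rfl⟩
      rw [hempty] at this
      exact this
end

section
/- Every root function 𝒵 with support Ψ arises from a coset of an admissible subgroup: there exist x ∈ Ω(Ψ) and an admissible subgroup X of Ω(Ψ) such that Z_α = x(α) + X(α) := {x(α) + f(α) | f ∈ X} for all α ∈ Ψ. -/
open Module Submodule

variable {V : Type*}

/-!
For `α ∈ Ψ` the reflection `s_α` exchanges `α` and `-α`, so `Z_α - 2 Z_α ⊆ Z_{-α}` and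
`Z_{-α} + 2 Z_α ⊆ Z_α`: each `Z_α` is closed under `(a, b, c) ↦ a + 2 (b - c)`, which in `ℤ` forces
it to be a coset `a + n_α ℤ`. Choosing `x(γ) ∈ Z_γ` on the basis `Γ` of `ℤΨ` and extending linearly
gives `x(α) ∈ Z_α` for all `α ∈ Ψ`, since `Ψ` is obtained from `Γ` by reflections; thus
`Z_α = x(α) + n_α ℤ`. Feeding these cosets into `Z_β - ⟨β,α∨⟩ Z_α ⊆ Z_{s_α β}`, and into the same
inclusion for `s_α β`, gives `n_{s_α β} = n_β` and `n_β ∣ ⟨β,α∨⟩ n_α`. Finally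
`X = {f | n_α ∣ f(α) for α ∈ Ψ}` has `X(α) = n_α ℤ`: for `α ∈ Γ` use `n_α` times the dual basis
vector, and pass from `β` to `s_α β` by composing with `s_α`, i.e. subtracting a multiple of the
coweight `n_α ⟨·, α∨⟩ ∈ X`.
-/

open Pointwise in
theorem exists_eq_setOf_dvd_sub_of_add_two_mul_sub_mem {A : Set ℤ} {a₀ : ℤ} (h₀ : a₀ ∈ A)
    (hA : ∀ a ∈ A, ∀ b ∈ A, ∀ c ∈ A, a + 2 * (b - c) ∈ A) :
    ∃ n : ℕ, A = {z | (n : ℤ) ∣ z - a₀} := by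
  obtain ⟨g, hg⟩ := Int.subgroup_cyclic (AddSubgroup.closure ((· - a₀) '' A))
  have mem_iff : ∀ z, z ∈ AddSubgroup.closure ((· - a₀) '' A) ↔ g ∣ z := by
    intro z
    rw [hg, ← AddSubgroup.zmultiples_eq_closure, Int.mem_zmultiples_iff]
  have dvd_sub : ∀ a ∈ A, g ∣ a - a₀ :=
    fun a ha => (mem_iff _).1 (AddSubgroup.subset_closure ⟨a, ha, rfl⟩)
  -- translation by twice any offset `b - a₀` preserves `A`, hence so does translation by `2 * g`
  have periodic : AddSubgroup.closure ((· - a₀) '' A) ≤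
      (AddAction.stabilizer ℤ A).comap (AddMonoidHom.mulLeft 2) := by
    rw [AddSubgroup.closure_le]
    rintro _ ⟨b, hb, rfl⟩
    simp only [SetLike.mem_coe, AddSubgroup.mem_comap, AddMonoidHom.coe_mulLeft,
      AddAction.mem_stabilizer_set, vadd_eq_add]
    refine fun a => ⟨fun h => ?_, fun ha => by simpa [add_comm] using hA a ha b hb a₀ h₀⟩
    convert hA _ h a₀ h₀ b hb using 1; ring
  have mem_of_dvd : ∀ a ∈ A, ∀ z, 2 * g ∣ z - a → z ∈ A := by
    rintro a ha z ⟨k, hk⟩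
    have hk' : k * g ∈ AddSubgroup.closure ((· - a₀) '' A) := (mem_iff _).2 (dvd_mul_left g k)
    have := AddAction.mem_stabilizer_set.1 (periodic hk') a
    simp only [AddMonoidHom.coe_mulLeft, vadd_eq_add] at this
    rw [show z = 2 * (k * g) + a by linear_combination hk]
    exact this.2 ha
  refine ⟨g.natAbs, Set.ext fun z => ⟨fun hz => Int.natAbs_dvd.2 (dvd_sub z hz), fun hz => ?_⟩⟩
  replace hz := Int.natAbs_dvd.1 hz
  by_cases heven : 2 * g ∣ z - a₀
  · exact mem_of_dvd a₀ h₀ z heven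
  -- otherwise `A` has a point at an odd multiple of `g` from `a₀`, since `g` lies in the closure
  obtain ⟨a₁, ha₁, hodd⟩ : ∃ a₁ ∈ A, ¬ 2 * g ∣ a₁ - a₀ := by
    by_contra! hall
    have hle : AddSubgroup.closure ((· - a₀) '' A) ≤ AddSubgroup.zmultiples (2 * g) := by
      rw [AddSubgroup.closure_le]
      rintro _ ⟨a, ha, rfl⟩
      exact Int.mem_zmultiples_iff.2 (hall a ha)
    obtain ⟨m, hm⟩ := Int.mem_zmultiples_iff.1 (hle ((mem_iff g).2 dvd_rfl))
    have hg0 : g = 0 := by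
      have : g * (2 * m - 1) = 0 := by linear_combination -hm
      exact (mul_eq_zero.1 this).resolve_right (by omega)
    exact heven (by simpa [hg0] using hz)
  obtain ⟨k, hk⟩ := hz
  obtain ⟨l, hl⟩ := dvd_sub a₁ ha₁
  have hk_odd : Odd k := Int.not_even_iff_odd.1 fun ⟨j, hj⟩ => heven ⟨j, by rw [hk, hj]; ring⟩
  have hl_odd : Odd l := Int.not_even_iff_odd.1 fun ⟨j, hj⟩ => hodd ⟨j, by rw [hl, hj]; ring⟩
  obtain ⟨j, hj⟩ := hk_odd.sub_odd hl_odd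
  exact mem_of_dvd a₁ ha₁ z ⟨j, by linear_combination hk - hl + g * hj⟩

section RootFunction

variable [AddCommGroup V] [Module ℝ V] {cv : V → Dual ℝ V} {pairInt : V → V → ℤ} {Γ Ψ : Set V}

def IsReflectionGenerated (cv : V → Dual ℝ V) (Γ Ψ : Set V) : Prop :=
  ∀ P : V → Prop, (∀ γ ∈ Γ, P γ) →
    (∀ α ∈ Ψ, ∀ β ∈ Ψ, P α → P β → P (β - cv α β • α)) → ∀ α ∈ Ψ, P α

theorem isReflectionGenerated_of_minimal {Φ : Set V} (hΨΦ : Ψ ⊆ Φ)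
    (hΨcl : ∀ α ∈ Ψ, ∀ β ∈ Ψ, β - cv α β • α ∈ Ψ) (hΓΨ : Γ ⊆ Ψ)
    (hmin : ∀ Ψ', IsRootSubsystem Φ cv Ψ' → Γ ⊆ Ψ' → Ψ ⊆ Ψ') :
    IsReflectionGenerated cv Γ Ψ := by
  intro P hbase hstep α hα
  have hsub : IsRootSubsystem Φ cv {α ∈ Ψ | P α} :=
    ⟨fun α hα => hΨΦ hα.1,
      fun α hα β hβ => ⟨hΨcl α hα.1 β hβ.1, hstep α hα.1 β hβ.1 hα.2 hβ.2⟩⟩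
  exact (hmin _ hsub (fun γ hγ => ⟨hΓΨ hγ, hbase γ hγ⟩) hα).2

theorem reflection_reflection_apply {α : V} (h2 : cv α α = 2) (β : V) :
    (β - cv α β • α) - cv α (β - cv α β • α) • α = β := by
  simpa only [Module.reflection_apply] using involutive_reflection h2 β

theorem coroot_apply_reflection {α : V} (h2 : cv α α = 2) (β : V) :
    cv α (β - cv α β • α) = -cv α β := by
  rw [map_sub, map_smul, smul_eq_mul, h2]
  ring

noncomputable def latticeBasis (hli : LinearIndependent ℝ (fun γ : Γ => (γ : V))) :
    Basis Γ ℤ (span ℤ Γ) :=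
  (Basis.span (hli.restrict_scalars' ℤ)).map (LinearEquiv.ofEq _ _ (by rw [Subtype.range_coe]))

@[simp]
theorem coe_latticeBasis (hli : LinearIndependent ℝ (fun γ : Γ => (γ : V))) (γ : Γ) :
    (latticeBasis hli γ : V) = γ := by
  simp [latticeBasis, Basis.span_apply]

theorem mk_eq_latticeBasis (hli : LinearIndependent ℝ (fun γ : Γ => (γ : V))) {γ : V}
    (hγ : γ ∈ Γ) : (⟨γ, subset_span hγ⟩ : span ℤ Γ) = latticeBasis hli ⟨γ, hγ⟩ :=
  Subtype.ext (coe_latticeBasis hli ⟨γ, hγ⟩).symm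

theorem exists_intCoweight_eq (hli : LinearIndependent ℝ (fun γ : Γ => (γ : V))) (φ : Dual ℝ V)
    (hφ : ∀ γ ∈ Γ, ∃ n : ℤ, φ γ = n) :
    ∃ g : span ℤ Γ →ₗ[ℤ] ℤ, ∀ v : span ℤ Γ, (g v : ℝ) = φ v := by
  choose! n hn using hφ
  let g := (latticeBasis hli).constr ℤ fun γ => n γ
  refine ⟨g, fun v => LinearMap.congr_fun ((latticeBasis hli).ext
    (f₁ := (Int.castAddHom ℝ).toIntLinearMap ∘ₗ g)
    (f₂ := (φ.restrictScalars ℤ) ∘ₗ (span ℤ Γ).subtype) fun γ => ?_) v⟩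
  simp [g, hn γ γ.2]

theorem apply_mk_sub_smul {p : Submodule ℤ V} (f : p →ₗ[ℤ] ℤ) {v w : V} {r : ℝ} {c : ℤ}
    (hr : r = c) (hv : v ∈ p) (hw : w ∈ p) (h : v - r • w ∈ p) :
    f ⟨v - r • w, h⟩ = f ⟨v, hv⟩ - c * f ⟨w, hw⟩ := by
  have : (⟨v - r • w, h⟩ : p) = ⟨v, hv⟩ - c • ⟨w, hw⟩ := by
    subst hr
    ext
    simp [Int.cast_smul_eq_zsmul]
  rw [this, map_sub, map_zsmul, smul_eq_mul]

theorem IsRootFunction.mono {Φ : Set V} {Z : V → Set ℤ} (hZ : IsRootFunction Φ cv pairInt Z)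
    (hΨΦ : Ψ ⊆ Φ) : IsRootFunction Ψ cv pairInt Z :=
  fun α hα β hβ => hZ α (hΨΦ hα) β (hΨΦ hβ)

theorem IsRootFunction.exists_eq_setOf_dvd_sub {Z : V → Set ℤ}
    (hZ : IsRootFunction Ψ cv pairInt Z) (hpair : ∀ α ∈ Ψ, ∀ β ∈ Ψ, (pairInt β α : ℝ) = cv α β)
    (hΨcl : ∀ α ∈ Ψ, ∀ β ∈ Ψ, β - cv α β • α ∈ Ψ) {α : V} (hα : α ∈ Ψ) (h2 : cv α α = 2)
    {a₀ : ℤ} (ha₀ : a₀ ∈ Z α) : ∃ n : ℕ, Z α = {z | (n : ℤ) ∣ z - a₀} := by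
  have hneg : α - cv α α • α = -α := by rw [h2]; module
  have hpos : -α - cv α (-α) • α = α := by rw [map_neg, h2]; module
  have hnα : -α ∈ Ψ := hneg ▸ hΨcl α hα α hα
  have hαα : pairInt α α = 2 := by exact_mod_cast (hpair α hα α hα).trans h2
  have hnαα : pairInt (-α) α = -2 := by
    have := hpair α hα (-α) hnα
    rw [map_neg, h2] at this
    exact_mod_cast this
  refine exists_eq_setOf_dvd_sub_of_add_two_mul_sub_mem ha₀ fun a ha b hb c hc => ?_
  have hac : a - 2 * c ∈ Z (-α) := hneg ▸ hZ α hα α hα ⟨a, ha, c, hc, by rw [hαα]⟩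
  have := hZ α hα (-α) hnα ⟨_, hac, b, hb, rfl⟩
  rw [hpos, hnαα] at this
  convert this using 1
  ring

theorem IsRootFunction.apply_mem {Z : V → Set ℤ} (hZ : IsRootFunction Ψ cv pairInt Z)
    (hgen : IsReflectionGenerated cv Γ Ψ) (hpair : ∀ α ∈ Ψ, ∀ β ∈ Ψ, (pairInt β α : ℝ) = cv α β)
    (hspan : ∀ α ∈ Ψ, α ∈ span ℤ Γ) (f : span ℤ Γ →ₗ[ℤ] ℤ)
    (hf : ∀ γ (hγ : γ ∈ Γ), f ⟨γ, subset_span hγ⟩ ∈ Z γ) (α : V) (hα : α ∈ Ψ) :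
    f ⟨α, hspan α hα⟩ ∈ Z α := by
  refine hgen (fun α => ∀ h : α ∈ span ℤ Γ, f ⟨α, h⟩ ∈ Z α) (fun γ hγ _ => hf γ hγ)
    (fun α hα β hβ ihα ihβ h => ?_) α hα _
  rw [apply_mk_sub_smul f (hpair α hα β hβ).symm (hspan β hβ) (hspan α hα)]
  exact hZ α hα β hβ ⟨_, ihβ _, _, ihα _, rfl⟩

theorem IsRootFunction.exists_coweight_mem {Z : V → Set ℤ} (hZ : IsRootFunction Ψ cv pairInt Z)
    (hli : LinearIndependent ℝ (fun γ : Γ => (γ : V))) (hgen : IsReflectionGenerated cv Γ Ψ)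
    (hpair : ∀ α ∈ Ψ, ∀ β ∈ Ψ, (pairInt β α : ℝ) = cv α β) (hspan : ∀ α ∈ Ψ, α ∈ span ℤ Γ)
    (hΓ : ∀ γ ∈ Γ, (Z γ).Nonempty) :
    ∃ x : span ℤ Γ →ₗ[ℤ] ℤ, ∀ α (hα : α ∈ Ψ), x ⟨α, hspan α hα⟩ ∈ Z α := by
  choose! a ha using hΓ
  refine ⟨(latticeBasis hli).constr ℤ fun γ => a γ, hZ.apply_mem hgen hpair hspan _ ?_⟩
  intro γ hγ
  rw [mk_eq_latticeBasis hli hγ, Basis.constr_basis]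
  exact ha γ hγ

theorem IsRootFunction.period_dvd {Z : V → Set ℤ} (hZ : IsRootFunction Ψ cv pairInt Z)
    (hpair : ∀ α ∈ Ψ, ∀ β ∈ Ψ, (pairInt β α : ℝ) = cv α β)
    (hΨcl : ∀ α ∈ Ψ, ∀ β ∈ Ψ, β - cv α β • α ∈ Ψ) (hspan : ∀ α ∈ Ψ, α ∈ span ℤ Γ)
    {x : span ℤ Γ →ₗ[ℤ] ℤ} {N : V → ℕ}
    (hN : ∀ α (hα : α ∈ Ψ), Z α = {z | (N α : ℤ) ∣ z - x ⟨α, hspan α hα⟩})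
    {α β : V} (hα : α ∈ Ψ) (hβ : β ∈ Ψ) :
    (N (β - cv α β • α) : ℤ) ∣ N β ∧ (N (β - cv α β • α) : ℤ) ∣ pairInt β α * N α := by
  have hσ := hΨcl α hα β hβ
  have hx := apply_mk_sub_smul x (hpair α hα β hβ).symm (hspan β hβ) (hspan α hα) (hspan _ hσ)
  have key : ∀ u v : ℤ, (N β : ℤ) ∣ u - x ⟨β, hspan β hβ⟩ → (N α : ℤ) ∣ v - x ⟨α, hspan α hα⟩ →
      (N (β - cv α β • α) : ℤ) ∣ (u - pairInt β α * v) - x ⟨_, hspan _ hσ⟩ := by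
    intro u v hu hv
    have : u - pairInt β α * v ∈ Z (β - cv α β • α) :=
      hZ α hα β hβ ⟨u, by rw [hN β hβ]; exact hu, v, by rw [hN α hα]; exact hv, rfl⟩
    rwa [hN _ hσ] at this
  constructor
  · simpa [hx] using key (x ⟨β, hspan β hβ⟩ + N β) (x ⟨α, hspan α hα⟩) (by simp) (by simp)
  · simpa [hx, mul_add] using key (x ⟨β, hspan β hβ⟩) (x ⟨α, hspan α hα⟩ + N α) (by simp) (by simp)

theorem IsRootFunction.period_reflection {Z : V → Set ℤ} (hZ : IsRootFunction Ψ cv pairInt Z)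
    (hpair : ∀ α ∈ Ψ, ∀ β ∈ Ψ, (pairInt β α : ℝ) = cv α β) (h2 : ∀ α ∈ Ψ, cv α α = 2)
    (hΨcl : ∀ α ∈ Ψ, ∀ β ∈ Ψ, β - cv α β • α ∈ Ψ) (hspan : ∀ α ∈ Ψ, α ∈ span ℤ Γ)
    {x : span ℤ Γ →ₗ[ℤ] ℤ} {N : V → ℕ}
    (hN : ∀ α (hα : α ∈ Ψ), Z α = {z | (N α : ℤ) ∣ z - x ⟨α, hspan α hα⟩}) :
    ∀ α ∈ Ψ, ∀ β ∈ Ψ, N (β - cv α β • α) = N β ∧ (N β : ℤ) ∣ pairInt β α * N α := by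
  intro α hα β hβ
  have hdvd := hZ.period_dvd hpair hΨcl hspan hN hα hβ
  have hdvd' := hZ.period_dvd hpair hΨcl hspan hN hα (hΨcl α hα β hβ)
  rw [reflection_reflection_apply (h2 α hα)] at hdvd'
  have heq : N (β - cv α β • α) = N β :=
    Nat.dvd_antisymm (Int.natCast_dvd_natCast.1 hdvd.1) (Int.natCast_dvd_natCast.1 hdvd'.1)
  exact ⟨heq, heq ▸ hdvd.2⟩

theorem apply_eq_of_mem_WGroup {T : Type*} (h2 : ∀ α ∈ Ψ, cv α α = 2)
    (hΨcl : ∀ α ∈ Ψ, ∀ β ∈ Ψ, β - cv α β • α ∈ Ψ) {N : V → T}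
    (hN : ∀ α ∈ Ψ, ∀ β ∈ Ψ, N (β - cv α β • α) = N β) {w : V ≃ₗ[ℝ] V}
    (hw : w ∈ WGroup cv Ψ h2) {α : V} (hα : α ∈ Ψ) : N (w α) = N α := by
  suffices ∀ α ∈ Ψ, w α ∈ Ψ ∧ N (w α) = N α from (this α hα).2
  have hrefl : ∀ δ (hδ : δ ∈ Ψ), ∀ α ∈ Ψ, reflection (h2 δ hδ) α ∈ Ψ ∧
      N (reflection (h2 δ hδ) α) = N α := fun δ hδ α hα => by
    rw [Module.reflection_apply]
    exact ⟨hΨcl δ hδ α hα, hN δ hδ α hα⟩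
  induction hw using Subgroup.closure_induction'' with
  | mem u hu => obtain ⟨δ, hδ, rfl⟩ := hu; exact hrefl δ hδ
  | inv_mem u hu => obtain ⟨δ, hδ, rfl⟩ := hu; exact hrefl δ hδ
  | one => exact fun α hα => ⟨hα, rfl⟩
  | mul u v _ _ ihu ihv =>
    intro α hα
    obtain ⟨hvα, hNv⟩ := ihv α hα
    obtain ⟨huvα, hNu⟩ := ihu _ hvα
    exact ⟨huvα, hNu.trans hNv⟩

def coweightSubgroup (Γ Ψ : Set V) (hspan : ∀ α ∈ Ψ, α ∈ span ℤ Γ) (N : V → ℕ) :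
    AddSubgroup (span ℤ Γ →ₗ[ℤ] ℤ) where
  carrier := {f | ∀ α, ∀ hα : α ∈ Ψ, (N α : ℤ) ∣ f ⟨α, hspan α hα⟩}
  add_mem' hf hg α hα := dvd_add (hf α hα) (hg α hα)
  zero_mem' _ _ := dvd_zero _
  neg_mem' hf α hα := dvd_neg.2 (hf α hα)

theorem isRootFunction_setOf_dvd {N : V → ℕ}
    (hN : ∀ α ∈ Ψ, ∀ β ∈ Ψ, N (β - cv α β • α) = N β ∧ (N β : ℤ) ∣ pairInt β α * N α) :
    IsRootFunction Ψ cv pairInt fun α => {z | (N α : ℤ) ∣ z} := by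
  rintro α hα β hβ _ ⟨a, ha, b, hb, rfl⟩
  show (N (β - cv α β • α) : ℤ) ∣ a - pairInt β α * b
  rw [(hN α hα β hβ).1]
  exact dvd_sub ha ((hN α hα β hβ).2.trans (mul_dvd_mul_left _ hb))

theorem smul_coord_mem_coweightSubgroup (hli : LinearIndependent ℝ (fun γ : Γ => (γ : V)))
    (hgen : IsReflectionGenerated cv Γ Ψ) (hpair : ∀ α ∈ Ψ, ∀ β ∈ Ψ, (pairInt β α : ℝ) = cv α β)
    (hspan : ∀ α ∈ Ψ, α ∈ span ℤ Γ) {N : V → ℕ}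
    (hN : ∀ α ∈ Ψ, ∀ β ∈ Ψ, N (β - cv α β • α) = N β ∧ (N β : ℤ) ∣ pairInt β α * N α)
    {γ : V} (hγ : γ ∈ Γ) :
    (N γ : ℤ) • (latticeBasis hli).coord ⟨γ, hγ⟩ ∈ coweightSubgroup Γ Ψ hspan N := by
  refine (isRootFunction_setOf_dvd hN).apply_mem hgen hpair hspan _ fun δ hδ => ?_
  rw [mk_eq_latticeBasis hli hδ]
  by_cases h : δ = γ
  · subst h
    simp
  · simp [h]

theorem exists_coroot_mem_coweightSubgroup (hli : LinearIndependent ℝ (fun γ : Γ => (γ : V)))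
    (hpair : ∀ α ∈ Ψ, ∀ β ∈ Ψ, (pairInt β α : ℝ) = cv α β) (hΓΨ : Γ ⊆ Ψ)
    (hspan : ∀ α ∈ Ψ, α ∈ span ℤ Γ) {N : V → ℕ}
    (hN : ∀ α ∈ Ψ, ∀ β ∈ Ψ, N (β - cv α β • α) = N β ∧ (N β : ℤ) ∣ pairInt β α * N α)
    {α : V} (hα : α ∈ Ψ) :
    ∃ g ∈ coweightSubgroup Γ Ψ hspan N,
      ∀ β (hβ : β ∈ Ψ), g ⟨β, hspan β hβ⟩ = N α * pairInt β α := by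
  obtain ⟨g, hg⟩ :=
    exists_intCoweight_eq hli (cv α) fun γ hγ => ⟨pairInt γ α, (hpair α hα γ (hΓΨ hγ)).symm⟩
  have hgβ : ∀ β (hβ : β ∈ Ψ), g ⟨β, hspan β hβ⟩ = pairInt β α := fun β hβ => by
    exact_mod_cast (hg ⟨β, hspan β hβ⟩).trans (hpair α hα β hβ).symm
  refine ⟨(N α : ℤ) • g, fun β hβ => ?_, fun β hβ => ?_⟩ <;>
    rw [LinearMap.smul_apply, hgβ β hβ, smul_eq_mul]
  rw [mul_comm]
  exact (hN α hα β hβ).2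

theorem exists_mem_coweightSubgroup_apply_eq (hli : LinearIndependent ℝ (fun γ : Γ => (γ : V)))
    (hgen : IsReflectionGenerated cv Γ Ψ) (hpair : ∀ α ∈ Ψ, ∀ β ∈ Ψ, (pairInt β α : ℝ) = cv α β)
    (h2 : ∀ α ∈ Ψ, cv α α = 2) (hΨcl : ∀ α ∈ Ψ, ∀ β ∈ Ψ, β - cv α β • α ∈ Ψ) (hΓΨ : Γ ⊆ Ψ)
    (hspan : ∀ α ∈ Ψ, α ∈ span ℤ Γ) {N : V → ℕ}
    (hN : ∀ α ∈ Ψ, ∀ β ∈ Ψ, N (β - cv α β • α) = N β ∧ (N β : ℤ) ∣ pairInt β α * N α)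
    {α : V} (hα : α ∈ Ψ) :
    ∃ f ∈ coweightSubgroup Γ Ψ hspan N, f ⟨α, hspan α hα⟩ = N α := by
  refine hgen (fun α => ∀ h : α ∈ span ℤ Γ, ∃ f ∈ coweightSubgroup Γ Ψ hspan N, f ⟨α, h⟩ = N α)
    (fun γ hγ _ => ⟨_, smul_coord_mem_coweightSubgroup hli hgen hpair hspan hN hγ, ?_⟩)
    (fun α hα β hβ _ ihβ _ => ?_) α hα _
  · rw [mk_eq_latticeBasis hli hγ]
    simp
  obtain ⟨f, hf, hfβ⟩ := ihβ (hspan β hβ)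
  obtain ⟨g, hg, hgval⟩ := exists_coroot_mem_coweightSubgroup hli hpair hΓΨ hspan hN hα
  obtain ⟨s, hs⟩ := hf α hα
  have hσ := hΨcl α hα β hβ
  have hpairσ : pairInt (β - cv α β • α) α = -pairInt β α := by
    have : (pairInt (β - cv α β • α) α : ℝ) = -pairInt β α := by
      rw [hpair α hα _ hσ, coroot_apply_reflection (h2 α hα) β, hpair α hα β hβ]
    exact_mod_cast this
  -- `f - s • g` is `f ∘ s_α`, which takes the value `f β = N β` at `s_α β`
  refine ⟨f - s • g, sub_mem hf (zsmul_mem hg s), ?_⟩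
  rw [LinearMap.sub_apply, LinearMap.smul_apply, smul_eq_mul,
    apply_mk_sub_smul f (hpair α hα β hβ).symm (hspan β hβ) (hspan α hα), hfβ, hs, hgval _ hσ,
    hpairσ, (hN α hα β hβ).1]
  ring

end RootFunction

variable [AddCommGroup V] [Module ℝ V]

theorem stmt14_general
    (Φ : Set V) (cv : V → Module.Dual ℝ V) (pairInt : V → V → ℤ)
    (h2 : ∀ α ∈ Φ, cv α α = 2)
    (hpair : ∀ α ∈ Φ, ∀ β ∈ Φ, (pairInt β α : ℝ) = cv α β)
    (Γ Ψ : Set V)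
    (hli : LinearIndependent ℝ (fun γ : Γ => (γ : V)))
    (hΨΦ : Ψ ⊆ Φ) (hΨcl : ∀ α ∈ Ψ, ∀ β ∈ Ψ, β - cv α β • α ∈ Ψ)
    (hΓΨ : Γ ⊆ Ψ)
    (hmin : ∀ Ψ', IsRootSubsystem Φ cv Ψ' → Γ ⊆ Ψ' → Ψ ⊆ Ψ')
    (hspan : ∀ α ∈ Ψ, α ∈ span ℤ Γ)
    (Z : V → Set ℤ) (hZ : IsRootFunction Φ cv pairInt Z)
    (hsupp : {α ∈ Φ | Z α ≠ ∅} = Ψ) :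
    ∃ x : span ℤ Γ →ₗ[ℤ] ℤ, ∃ X : AddSubgroup (span ℤ Γ →ₗ[ℤ] ℤ),
      IsAdmissibleSubgroup cv pairInt Γ Ψ (fun α hα => h2 α (hΨΦ hα)) hspan X ∧
      ∀ α, ∀ hα : α ∈ Ψ,
        Z α = {z : ℤ | ∃ f ∈ X, z = x ⟨α, hspan α hα⟩ + f ⟨α, hspan α hα⟩} := by
  have h2Ψ : ∀ α ∈ Ψ, cv α α = 2 := fun α hα => h2 α (hΨΦ hα)
  have hpairΨ : ∀ α ∈ Ψ, ∀ β ∈ Ψ, (pairInt β α : ℝ) = cv α β :=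
    fun α hα β hβ => hpair α (hΨΦ hα) β (hΨΦ hβ)
  have hgen := isReflectionGenerated_of_minimal hΨΦ hΨcl hΓΨ hmin
  have hZΨ := hZ.mono hΨΦ
  have hne : ∀ α ∈ Ψ, (Z α).Nonempty := fun α hα =>
    Set.nonempty_iff_ne_empty.2 (hsupp.symm ▸ hα : α ∈ {α ∈ Φ | Z α ≠ ∅}).2
  obtain ⟨x, hx⟩ := hZΨ.exists_coweight_mem hli hgen hpairΨ hspan fun γ hγ => hne γ (hΓΨ hγ)
  choose! N hN using fun α hα =>
    hZΨ.exists_eq_setOf_dvd_sub hpairΨ hΨcl hα (h2Ψ α hα) (hx α hα)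
  have hNrefl := hZΨ.period_reflection hpairΨ h2Ψ hΨcl hspan hN
  refine ⟨x, coweightSubgroup Γ Ψ hspan N, ⟨N, fun α hα β hβ => (hNrefl α hα β hβ).2,
    fun α hα w hw => apply_eq_of_mem_WGroup h2Ψ hΨcl (fun α hα β hβ => (hNrefl α hα β hβ).1) hw hα,
    rfl⟩, fun α hα => ?_⟩
  rw [hN α hα]
  ext z
  constructor
  · rintro ⟨k, hk⟩
    obtain ⟨f, hf, hfα⟩ :=
      exists_mem_coweightSubgroup_apply_eq hli hgen hpairΨ h2Ψ hΨcl hΓΨ hspan hNrefl hα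
    exact ⟨k • f, zsmul_mem hf k, by simp [hfα]; linear_combination hk⟩
  · rintro ⟨f, hf, rfl⟩
    simpa using hf α hα

theorem stmt14
    (Φ : Set V) (cv : V → Module.Dual ℝ V) (pairInt : V → V → ℤ)
    (hne : ∀ α ∈ Φ, α ≠ 0)
    (h2 : ∀ α ∈ Φ, cv α α = 2)
    (hpair : ∀ α ∈ Φ, ∀ β ∈ Φ, (pairInt β α : ℝ) = cv α β)
    (hrefl : ∀ α ∈ Φ, (fun β => β - cv α β • α) '' Φ = Φ)
    (Γ Ψ : Set V) (hΓΦ : Γ ⊆ Φ)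
    (hli : LinearIndependent ℝ (fun γ : Γ => (γ : V)))
    (hΨΦ : Ψ ⊆ Φ) (hΨcl : ∀ α ∈ Ψ, ∀ β ∈ Ψ, β - cv α β • α ∈ Ψ)
    (hΓΨ : Γ ⊆ Ψ)
    (hmin : ∀ Ψ', IsRootSubsystem Φ cv Ψ' → Γ ⊆ Ψ' → Ψ ⊆ Ψ')
    (hspan : ∀ α ∈ Ψ, α ∈ span ℤ Γ)
    (Z : V → Set ℤ) (hZ : IsRootFunction Φ cv pairInt Z)
    (hsupp : {α ∈ Φ | Z α ≠ ∅} = Ψ) :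
    ∃ x : span ℤ Γ →ₗ[ℤ] ℤ, ∃ X : AddSubgroup (span ℤ Γ →ₗ[ℤ] ℤ),
      IsAdmissibleSubgroup cv pairInt Γ Ψ (fun α hα => h2 α (hΨΦ hα)) hspan X ∧
      ∀ α, ∀ hα : α ∈ Ψ,
        Z α = {z : ℤ | ∃ f ∈ X, z = x ⟨α, hspan α hα⟩ + f ⟨α, hspan α hα⟩} :=
  stmt14_general Φ cv pairInt h2 hpair Γ Ψ hli hΨΦ hΨcl hΓΨ hmin hspan Z hZ hsupp
end

section
/- Let X₁, X₂ be admissible subgroups of Ω(Ψ) and x₁, x₂ ∈ Ω(Ψ). If x₁(α) + X₁(α) = x₂(α) + X₂(α) for all α ∈ Ψ (where x(α) + X(α) := {x(α) + f(α) | f ∈ X}), then X₁ = X₂ and x₁ − x₂ ∈ X₁; in particular the cosets x₁ + X₁ and x₂ + X₂ coincide. -/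
open Module Submodule

variable {V : Type*}

variable [AddCommGroup V] [Module ℝ V]

theorem stmt15
    (Φ : Set V) (cv : V → Module.Dual ℝ V) (pairInt : V → V → ℤ)
    (hne : ∀ α ∈ Φ, α ≠ 0)
    (h2 : ∀ α ∈ Φ, cv α α = 2)
    (hpair : ∀ α ∈ Φ, ∀ β ∈ Φ, (pairInt β α : ℝ) = cv α β)
    (hrefl : ∀ α ∈ Φ, (fun β => β - cv α β • α) '' Φ = Φ)
    (Γ Ψ : Set V) (hΓΦ : Γ ⊆ Φ)
    (hli : LinearIndependent ℝ (fun γ : Γ => (γ : V)))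
    (hΨΦ : Ψ ⊆ Φ) (hΨcl : ∀ α ∈ Ψ, ∀ β ∈ Ψ, β - cv α β • α ∈ Ψ)
    (hΓΨ : Γ ⊆ Ψ)
    (hmin : ∀ Ψ', IsRootSubsystem Φ cv Ψ' → Γ ⊆ Ψ' → Ψ ⊆ Ψ')
    (hspan : ∀ α ∈ Ψ, α ∈ span ℤ Γ)
    (X₁ X₂ : AddSubgroup (span ℤ Γ →ₗ[ℤ] ℤ))
    (hadm₁ : IsAdmissibleSubgroup cv pairInt Γ Ψ (fun α hα => h2 α (hΨΦ hα)) hspan X₁)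
    (hadm₂ : IsAdmissibleSubgroup cv pairInt Γ Ψ (fun α hα => h2 α (hΨΦ hα)) hspan X₂)
    (x₁ x₂ : span ℤ Γ →ₗ[ℤ] ℤ)
    (heq : ∀ α, ∀ hα : α ∈ Ψ,
      {z : ℤ | ∃ f ∈ X₁, z = x₁ ⟨α, hspan α hα⟩ + f ⟨α, hspan α hα⟩} =
      {z : ℤ | ∃ f ∈ X₂, z = x₂ ⟨α, hspan α hα⟩ + f ⟨α, hspan α hα⟩}) :
    X₁ = X₂ ∧ x₁ - x₂ ∈ X₁ ∧
      {g : span ℤ Γ →ₗ[ℤ] ℤ | ∃ f ∈ X₁, g = x₁ + f} =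
      {g : span ℤ Γ →ₗ[ℤ] ℤ | ∃ f ∈ X₂, g = x₂ + f} := by
  obtain ⟨N₁, -, -, hX₁⟩ := hadm₁
  obtain ⟨N₂, -, -, hX₂⟩ := hadm₂
  -- From heq with 0 ∈ X₁: for each α, x₁(α) = x₂(α) + k(α) with k ∈ X₂.
  have key₁ : ∀ α, ∀ hα : α ∈ Ψ, ∃ k ∈ X₂,
      x₁ ⟨α, hspan α hα⟩ = x₂ ⟨α, hspan α hα⟩ + k ⟨α, hspan α hα⟩ := by
    intro α hα
    have h0 : x₁ ⟨α, hspan α hα⟩ ∈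
        {z : ℤ | ∃ f ∈ X₁, z = x₁ ⟨α, hspan α hα⟩ + f ⟨α, hspan α hα⟩} :=
      ⟨0, X₁.zero_mem, by simp⟩
    rw [heq α hα] at h0
    exact h0
  have key₂ : ∀ α, ∀ hα : α ∈ Ψ, ∃ k ∈ X₁,
      x₂ ⟨α, hspan α hα⟩ = x₁ ⟨α, hspan α hα⟩ + k ⟨α, hspan α hα⟩ := by
    intro α hα
    have h0 : x₂ ⟨α, hspan α hα⟩ ∈
        {z : ℤ | ∃ f ∈ X₂, z = x₂ ⟨α, hspan α hα⟩ + f ⟨α, hspan α hα⟩} :=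
      ⟨0, X₂.zero_mem, by simp⟩
    rw [← heq α hα] at h0
    exact h0
  have mem₁ : ∀ f, f ∈ X₁ ↔ ∀ α, ∀ hα : α ∈ Ψ, (N₁ α : ℤ) ∣ f ⟨α, hspan α hα⟩ := by
    intro f
    constructor
    · intro hf; have := hX₁ ▸ (show f ∈ (X₁ : Set _) from hf); exact this
    · intro hf; show f ∈ (X₁ : Set _); rw [hX₁]; exact hf
  have mem₂ : ∀ f, f ∈ X₂ ↔ ∀ α, ∀ hα : α ∈ Ψ, (N₂ α : ℤ) ∣ f ⟨α, hspan α hα⟩ := by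
    intro f
    constructor
    · intro hf; have := hX₂ ▸ (show f ∈ (X₂ : Set _) from hf); exact this
    · intro hf; show f ∈ (X₂ : Set _); rw [hX₂]; exact hf
  have sub₂₁ : ∀ f ∈ X₂, f ∈ X₁ := by
    intro f hf
    rw [mem₁]
    intro α hα
    have hmem : x₂ ⟨α, hspan α hα⟩ + f ⟨α, hspan α hα⟩ ∈
        {z : ℤ | ∃ g ∈ X₁, z = x₁ ⟨α, hspan α hα⟩ + g ⟨α, hspan α hα⟩} := by
      rw [heq α hα]; exact ⟨f, hf, rfl⟩
    obtain ⟨g, hg, hgeq⟩ := hmem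
    obtain ⟨k, hk, hkeq⟩ := key₂ α hα
    have hfv : f ⟨α, hspan α hα⟩ = (g - k) ⟨α, hspan α hα⟩ := by
      simp only [LinearMap.sub_apply]
      omega
    rw [hfv]
    exact (mem₁ (g - k)).1 (X₁.sub_mem hg hk) α hα
  have sub₁₂ : ∀ f ∈ X₁, f ∈ X₂ := by
    intro f hf
    rw [mem₂]
    intro α hα
    have hmem : x₁ ⟨α, hspan α hα⟩ + f ⟨α, hspan α hα⟩ ∈
        {z : ℤ | ∃ g ∈ X₂, z = x₂ ⟨α, hspan α hα⟩ + g ⟨α, hspan α hα⟩} := by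
      rw [← heq α hα]; exact ⟨f, hf, rfl⟩
    obtain ⟨g, hg, hgeq⟩ := hmem
    obtain ⟨k, hk, hkeq⟩ := key₁ α hα
    have hfv : f ⟨α, hspan α hα⟩ = (g - k) ⟨α, hspan α hα⟩ := by
      simp only [LinearMap.sub_apply]
      omega
    rw [hfv]
    exact (mem₂ (g - k)).1 (X₂.sub_mem hg hk) α hα
  have hXeq : X₁ = X₂ := by
    ext f; exact ⟨fun h => sub₁₂ f h, fun h => sub₂₁ f h⟩
  have hdiff : x₁ - x₂ ∈ X₁ := by
    rw [mem₁]
    intro α hα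
    obtain ⟨k, hk, hkeq⟩ := key₂ α hα
    have : (x₁ - x₂) ⟨α, hspan α hα⟩ = (-k) ⟨α, hspan α hα⟩ := by
      simp only [LinearMap.sub_apply, LinearMap.neg_apply]
      omega
    rw [this]
    exact (mem₁ (-k)).1 (X₁.neg_mem hk) α hα
  refine ⟨hXeq, hdiff, ?_⟩
  ext g
  constructor
  · rintro ⟨f, hf, rfl⟩
    refine ⟨(x₁ - x₂) + f, ?_, by abel⟩
    exact X₂.add_mem (hXeq ▸ hdiff) (sub₁₂ f hf)
  · rintro ⟨f, hf, rfl⟩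
    refine ⟨(x₂ - x₁) + f, ?_, by abel⟩
    have : x₂ - x₁ ∈ X₁ := by simpa using X₁.neg_mem hdiff
    exact X₁.add_mem this (sub₂₁ f hf)
end

section
/- Let 𝒵 be a root function with support Ψ. Then the defining inclusion is actually an equality on the support: for all α, β ∈ Ψ one has Z_β − ⟨β,α∨⟩·Z_α = Z_{s_α(β)}. -/
open Module Submodule

variable {V : Type*}

variable [AddCommGroup V] [Module ℝ V]

theorem stmt16
    (Φ : Set V) (cv : V → Module.Dual ℝ V) (pairInt : V → V → ℤ)
    (hne : ∀ α ∈ Φ, α ≠ 0)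
    (h2 : ∀ α ∈ Φ, cv α α = 2)
    (hpair : ∀ α ∈ Φ, ∀ β ∈ Φ, (pairInt β α : ℝ) = cv α β)
    (hrefl : ∀ α ∈ Φ, (fun β => β - cv α β • α) '' Φ = Φ)
    (Ψ : Set V) (Z : V → Set ℤ) (hZ : IsRootFunction Φ cv pairInt Z)
    (hsupp : {α ∈ Φ | Z α ≠ ∅} = Ψ) :
    ∀ α ∈ Ψ, ∀ β ∈ Ψ,
      zdiff (Z β) (pairInt β α) (Z α) = Z (β - cv α β • α) := by
  intro α hα β hβ
  rw [← hsupp] at hα hβ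
  obtain ⟨hαΦ, hαne⟩ := hα
  obtain ⟨hβΦ, -⟩ := hβ
  have hsβΦ : β - cv α β • α ∈ Φ := by
    rw [← hrefl α hαΦ]; exact ⟨β, hβΦ, rfl⟩
  have hcv : cv α (β - cv α β • α) = - cv α β := by
    rw [map_sub, map_smul, h2 α hαΦ]; rw [smul_eq_mul]; ring
  have hk : pairInt (β - cv α β • α) α = - pairInt β α := by
    have h1 := hpair α hαΦ _ hsβΦ
    have h2' := hpair α hαΦ β hβΦ
    have : ((pairInt (β - cv α β • α) α : ℤ) : ℝ) = ((- pairInt β α : ℤ) : ℝ) := by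
      rw [h1, hcv, ← h2']; push_cast; ring
    exact_mod_cast this
  have hfix : (β - cv α β • α) - cv α (β - cv α β • α) • α = β := by
    rw [hcv]; module
  apply Set.Subset.antisymm (hZ α hαΦ β hβΦ)
  intro z hz
  obtain ⟨a, ha⟩ := Set.nonempty_iff_ne_empty.2 hαne
  have hb : z + pairInt β α * a ∈ Z β := by
    have := hZ α hαΦ _ hsβΦ ⟨z, hz, a, ha, rfl⟩
    rw [hfix] at this
    rw [hk] at this
    convert this using 1
    ring
  exact ⟨z + pairInt β α * a, hb, a, ha, by ring⟩
end

section
/- Let Γ ⊆ Φ be connected in the sense that for all α,β ∈ Γ there is a sequence α = α₀, α₁, …, α_n = β in Γ with ⟨α_{i+1}, α_i∨⟩ ≠ 0 for 0 ≤ i < n. Let M : Γ → ℕ, α ↦ m_α, satisfy m_α > 0 for all α ∈ Γ and m_β ∣ ⟨β,α∨⟩·m_α for all α,β ∈ Γ. Let p be a prime which does not divide ⟨α,β∨⟩ for any α,β ∈ Γ with ⟨α,β∨⟩ ≠ 0. Then the p-adic valuation ν_p(m_α) is the same for all α ∈ Γ. -/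
open Module Submodule

variable {V : Type*}

variable [AddCommGroup V] [Module ℝ V]

lemma padicValNat_le_of_dvd_aux {p : ℕ} (hp : p.Prime) {a b : ℕ} (hb : b ≠ 0) (h : a ∣ b) :
    padicValNat p a ≤ padicValNat p b := by
  haveI : Fact p.Prime := ⟨hp⟩
  rw [← padicValNat_dvd_iff_le hb]
  exact dvd_trans pow_padicValNat_dvd h

theorem stmt18
    (Φ : Set V) (cv : V → Module.Dual ℝ V) (pairInt : V → V → ℤ)
    (hne : ∀ α ∈ Φ, α ≠ 0)
    (h2 : ∀ α ∈ Φ, cv α α = 2)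
    (hpair : ∀ α ∈ Φ, ∀ β ∈ Φ, (pairInt β α : ℝ) = cv α β)
    (hrefl : ∀ α ∈ Φ, (fun β => β - cv α β • α) '' Φ = Φ)
    (Γ : Set V) (hΓΦ : Γ ⊆ Φ)
    (hconn : ∀ α ∈ Γ, ∀ β ∈ Γ, ∃ n : ℕ, ∃ a : ℕ → V,
      a 0 = α ∧ a n = β ∧ (∀ i ≤ n, a i ∈ Γ) ∧ ∀ i < n, pairInt (a (i + 1)) (a i) ≠ 0)
    (M : V → ℕ) (hMpos : ∀ α ∈ Γ, 0 < M α)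
    (hM : ∀ α ∈ Γ, ∀ β ∈ Γ, (M β : ℤ) ∣ pairInt β α * M α)
    (p : ℕ) (hp : p.Prime)
    (hpd : ∀ α ∈ Γ, ∀ β ∈ Γ, pairInt α β ≠ 0 → ¬ (p : ℤ) ∣ pairInt α β) :
    ∀ α ∈ Γ, ∀ β ∈ Γ, padicValNat p (M α) = padicValNat p (M β) := by
  haveI : Fact p.Prime := ⟨hp⟩
  have step : ∀ α ∈ Γ, ∀ β ∈ Γ, pairInt β α ≠ 0 →
      padicValNat p (M β) ≤ padicValNat p (M α) := by
    intro α hα β hβ hne0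
    have hdvd : (M β : ℤ) ∣ pairInt β α * M α := hM α hα β hβ
    have hdvdN : M β ∣ (pairInt β α).natAbs * M α := by
      have := Int.natAbs_dvd_natAbs.mpr hdvd
      simpa [Int.natAbs_mul] using this
    have hcne : (pairInt β α).natAbs ≠ 0 := fun h => hne0 (Int.natAbs_eq_zero.mp h)
    have hMαne : M α ≠ 0 := (hMpos α hα).ne'
    have hne' : (pairInt β α).natAbs * M α ≠ 0 := Nat.mul_ne_zero hcne hMαne
    have h1 := padicValNat_le_of_dvd_aux hp hne' hdvdN
    rw [padicValNat.mul hcne hMαne] at h1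
    have h0 : padicValNat p (pairInt β α).natAbs = 0 := by
      apply padicValNat.eq_zero_of_not_dvd
      intro hd
      exact hpd β hβ α hα hne0
        (dvd_trans (Int.natCast_dvd_natCast.mpr hd) (Int.natAbs_dvd.mpr dvd_rfl))
    omega
  have chain : ∀ n : ℕ, ∀ a : ℕ → V, (∀ i ≤ n, a i ∈ Γ) →
      (∀ i < n, pairInt (a (i + 1)) (a i) ≠ 0) →
      padicValNat p (M (a n)) ≤ padicValNat p (M (a 0)) := by
    intro n
    induction n with
    | zero => intro a _ _; exact le_rfl
    | succ n ih =>
      intro a hΓa hne0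
      refine le_trans (step (a n) (hΓa n (Nat.le_succ n)) (a (n + 1)) (hΓa (n + 1) le_rfl)
        (hne0 n (Nat.lt_succ_self n))) ?_
      exact ih a (fun i hi => hΓa i (le_trans hi (Nat.le_succ n)))
        (fun i hi => hne0 i (Nat.lt_succ_of_lt hi))
  intro α hα β hβ
  obtain ⟨n, a, ha0, han, haΓ, hane⟩ := hconn α hα β hβ
  obtain ⟨m, b, hb0, hbm, hbΓ, hbne⟩ := hconn β hβ α hα
  have h1 := chain n a haΓ hane
  have h2 := chain m b hbΓ hbne
  rw [ha0, han] at h1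
  rw [hb0, hbm] at h2
  omega
end
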